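/- arXiv:cs/0412005 — 15 statements merged into one kernel-verified Lean document; each statement's English description precedes it below -/
import Mathlib

section
/- Let F be a field, A an n×n matrix over F, and λ₀ ∈ F a simple root of the characteristic polynomial P of A (i.e. P(λ₀) = 0 and P′(λ₀) ≠ 0). Then adj(λ₀·I − A) ≠ 0, so A has an eigenvector for λ₀ among the columns of adj(λ₀·I − A). -/
open Polynomial Matrix

/-- If `λ₀` is a simple root of the characteristic polynomial of `A`
(i.e. `P(λ₀) = 0` and `P′(λ₀) ≠ 0`), then `adj(λ₀·I − A) ≠ 0`, so some column of
`adj(λ₀·I − A)` is an eigenvector of `A` for `λ₀`. -/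
theorem adjugate_ne_zero_of_simple_root_charpoly
    (F : Type*) [Field F] (n : ℕ) (A : Matrix (Fin n) (Fin n) F) (l₀ : F)
    (h0 : (Matrix.charpoly A).eval l₀ = 0)
    (h1 : (Polynomial.derivative (Matrix.charpoly A)).eval l₀ ≠ 0) :
    Matrix.adjugate (l₀ • (1 : Matrix (Fin n) (Fin n) F) - A) ≠ 0 ∧
    ∃ j : Fin n,
      (fun i => Matrix.adjugate (l₀ • (1 : Matrix (Fin n) (Fin n) F) - A) i j) ≠ 0 ∧
      A.mulVec (fun i => Matrix.adjugate (l₀ • (1 : Matrix (Fin n) (Fin n) F) - A) i j) =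
        l₀ • (fun i => Matrix.adjugate (l₀ • (1 : Matrix (Fin n) (Fin n) F) - A) i j) := by
  rcases Nat.eq_zero_or_pos n with hn | hn
  · exfalso
    subst hn
    simp [Matrix.charpoly, Matrix.det_isEmpty] at h0
  set M : Matrix (Fin n) (Fin n) F := l₀ • (1 : Matrix (Fin n) (Fin n) F) - A with hM
  set N : Matrix (Fin n) (Fin n) F[X] := charmatrix A with hN
  -- the evaluation of the charmatrix at l₀ is M
  have hmap : ((evalRingHom l₀ : F[X] →+* F).mapMatrix N) = M := by
    ext i j
    by_cases h : i = j
    · subst h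
      simp [hN, hM, charmatrix_apply_eq, Matrix.one_apply, Matrix.sub_apply]
    · simp [hN, hM, charmatrix_apply_ne _ _ _ h, Matrix.one_apply, h, Matrix.sub_apply]
  have hdetM : M.det = 0 := by
    rw [← hmap, ← RingHom.map_det]
    simpa [Matrix.charpoly] using h0
  have hadjmap : ((evalRingHom l₀ : F[X] →+* F).mapMatrix N.adjugate) = M.adjugate := by
    rw [RingHom.map_adjugate, hmap]
  -- factor the characteristic polynomial
  obtain ⟨Q, hQ⟩ : (X - C l₀) ∣ Matrix.charpoly A :=
    dvd_iff_isRoot.mpr (by simpa [IsRoot] using h0)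
  have hQl₀ : Q.eval l₀ ≠ 0 := by
    intro h
    apply h1
    rw [hQ]
    simp [derivative_mul, h]
  -- main claim: adjugate M ≠ 0
  have hadj : M.adjugate ≠ 0 := by
    intro hzero
    -- every entry of adjugate N is divisible by X - C l₀
    have hdvd : ∀ i j, (X - C l₀) ∣ N.adjugate i j := by
      intro i j
      rw [dvd_iff_isRoot]
      have := congrFun (congrFun (hadjmap.trans hzero) i) j
      simpa [IsRoot] using this
    set B : Matrix (Fin n) (Fin n) F[X] :=
      Matrix.of fun i j => N.adjugate i j / (X - C l₀) with hB
    have hXl : (X - C l₀ : F[X]) ≠ 0 := X_sub_C_ne_zero l₀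
    have hfac : N.adjugate = (X - C l₀) • B := by
      refine Matrix.ext fun i j => ?_
      simp only [hB, Matrix.smul_apply, Matrix.of_apply, smul_eq_mul]
      exact (EuclideanDomain.mul_div_cancel' hXl (hdvd i j)).symm
    have hdet1 : N.adjugate.det = (X - C l₀) ^ n * B.det := by
      rw [hfac, Matrix.det_smul]
      simp
    have hdet2 : N.adjugate.det = ((X - C l₀) * Q) ^ (n - 1) := by
      rw [Matrix.det_adjugate]
      rw [show N.det = Matrix.charpoly A from rfl, hQ]
      simp
    have hn1 : n = (n - 1) + 1 := (Nat.succ_pred_eq_of_pos hn).symm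
    have key : (X - C l₀) * B.det = Q ^ (n - 1) := by
      have h3 : (X - C l₀) ^ (n - 1) * ((X - C l₀) * B.det)
          = (X - C l₀) ^ (n - 1) * Q ^ (n - 1) := by
        rw [← mul_pow, ← hdet2, hdet1, ← mul_assoc, ← pow_succ, Nat.sub_add_cancel hn]
      exact mul_left_cancel₀ (pow_ne_zero _ hXl) h3
    have := congrArg (eval l₀) key
    rw [eval_mul, eval_pow] at this
    simp at this
    exact pow_ne_zero (n - 1) hQl₀ this.symm
  refine ⟨hadj, ?_⟩
  -- find a nonzero entry
  obtain ⟨i, j, hij⟩ : ∃ i j, M.adjugate i j ≠ 0 := by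
    by_contra h
    push_neg at h
    exact hadj (by ext i j; simpa using h i j)
  refine ⟨j, ?_, ?_⟩
  · intro h
    exact hij (congrFun h i)
  · have hMadj : M * M.adjugate = 0 := by
      rw [Matrix.mul_adjugate, hdetM]
      simp
    have hMv : M.mulVec (fun i => M.adjugate i j) = 0 := by
      funext k
      have := congrFun (congrFun hMadj k) j
      simpa [Matrix.mul_apply, Matrix.mulVec, dotProduct] using this
    have : l₀ • (fun i => M.adjugate i j) - A.mulVec (fun i => M.adjugate i j) = 0 := by
      rw [← hMv, hM, Matrix.sub_mulVec, Matrix.smul_mulVec, Matrix.one_mulVec]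
    have h4 := sub_eq_zero.mp this
    exact h4.symm
end

section
/- Let F be a field and A an n×n matrix over F. Writing adj(X·I − A) = Σ_{k=0}^{n−1} Bₖ Xᵏ and P(X) = det(X·I − A) = Σ_{k=0}^{n} pₖ' Xᵏ (coefficients indexed by increasing powers), one has tr(Bₖ) = (k+1)·p'_{k+1} for every 0 ≤ k ≤ n−1. -/
/-!
Jacobi's formula: differentiating `det (X·I − A)` one row at a time replaces row `i` of the
characteristic matrix by the unit row `eᵢ`, whose determinant is the cofactor `adj(X·I − A)ᵢᵢ`.
Hence `P' = tr adj(X·I − A)`, and comparing coefficients of `Xᵏ` gives the claim.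
-/

open Polynomial Matrix

namespace Matrix

variable {n R : Type*} [Fintype n] [DecidableEq n] [CommRing R]

theorem derivative_det_eq_sum_det_updateCol (M : Matrix n n R[X]) :
    derivative M.det = ∑ j, (M.updateCol j fun i => derivative (M i j)).det := by
  simp only [det_apply', map_sum, derivative_intCast_mul, derivative_prod_finset,
    Finset.mul_sum]
  rw [Finset.sum_comm]
  refine Fintype.sum_congr _ _ fun j => Fintype.sum_congr _ _ fun σ => ?_
  rw [← Finset.prod_erase_mul _ _ (Finset.mem_univ j), updateCol_self,
    Finset.prod_congr rfl fun i hi => updateCol_ne (Finset.ne_of_mem_erase hi)]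

theorem derivative_det_eq_sum_det_updateRow (M : Matrix n n R[X]) :
    derivative M.det = ∑ i, (M.updateRow i fun j => derivative (M i j)).det := by
  rw [← det_transpose, derivative_det_eq_sum_det_updateCol]
  simp only [updateCol_transpose, det_transpose, transpose_apply]

theorem derivative_charpoly (A : Matrix n n R) :
    derivative A.charpoly = (adjugate (charmatrix A)).trace := by
  rw [charpoly, derivative_det_eq_sum_det_updateRow]
  refine Fintype.sum_congr _ _ fun i => ?_
  rw [diag_apply, adjugate_apply]
  congr 2
  ext j
  rcases eq_or_ne i j with rfl | hij
  · simp [charmatrix_apply_eq]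
  · simp [hij]

end Matrix

/-- Writing `adj(X·I − A) = Σ_{k=0}^{n−1} Bₖ Xᵏ` and `P(X) = Σ_{k=0}^{n} p'ₖ Xᵏ` for
the characteristic polynomial, one has `tr(Bₖ) = (k+1)·p'_{k+1}` for `0 ≤ k ≤ n−1`. -/
theorem trace_adjugate_charmatrix_coeff
    (F : Type*) [Field F] (n : ℕ) (A : Matrix (Fin n) (Fin n) F)
    (B : ℕ → Matrix (Fin n) (Fin n) F)
    (hB : ∀ k, B k = Matrix.of fun i j => ((Matrix.adjugate (Matrix.charmatrix A)) i j).coeff k) :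
    ∀ k : ℕ, k < n →
      (B k).trace = ((k : F) + 1) * (Matrix.charpoly A).coeff (k + 1) := by
  intro k _
  have hcoeff := congrArg (coeff · k) (derivative_charpoly A)
  simp only [coeff_derivative] at hcoeff
  rw [hB, mul_comm, hcoeff, ← lcoeff_apply, AddMonoidHom.map_trace]
  rfl
end

section
/- Let F be a field and A an n×n matrix over F. Writing adj(X·I − A) = Σ_{k=0}^{n−1} Bₖ Xᵏ and P(X) = Σ_{k=0}^{n} p'ₖ Xᵏ for the characteristic polynomial, one has tr(A·B_{k+1}) = (k+1−n)·p'_{k+1} for every 0 ≤ k ≤ n−2; in particular, in characteristic 0 the coefficients of P are determined from the Bₖ by p'_{k+1} = tr(A·B_{k+1})/(k+1−n). -/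
open Polynomial Matrix

private lemma trace_map_ringHom {R S : Type*} [CommRing R] [CommRing S] (f : R →+* S)
    {m : Type*} [Fintype m] (M : Matrix m m R) :
    (M.map f).trace = f M.trace := by
  simp [Matrix.trace, Matrix.diag, map_sum]

/-- Jacobi-type formula: the linear coefficient of `det (N + X•1)` is `trace (adjugate N)`,
over an integral domain, assuming `det N ≠ 0`. -/
private lemma jacobi_coeff_one {R : Type*} [CommRing R] [IsDomain R]
    {m : Type*} [Fintype m] [DecidableEq m] (N : Matrix m m R) (hN : N.det ≠ 0) :
    (Matrix.det (N.map Polynomial.C + (X : R[X]) • 1)).coeff 1 = (Matrix.adjugate N).trace := by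
  classical
  let K := FractionRing R
  let φ : R →+* K := algebraMap R K
  have hφ : Function.Injective φ := IsFractionRing.injective R K
  apply hφ
  set N' : Matrix m m K := N.map φ with hN'
  have hdet : N'.det = φ N.det := (RingHom.map_det φ N).symm
  have hdet0 : N'.det ≠ 0 := by
    rw [hdet]
    simpa using fun h => hN (hφ (by simpa using h))
  have hunit : IsUnit N'.det := isUnit_iff_ne_zero.mpr hdet0
  -- transfer the LHS
  have hmap : (N.map Polynomial.C + (X : R[X]) • 1).map (Polynomial.mapRingHom φ) =
      N'.map Polynomial.C + (X : K[X]) • 1 := by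
    ext i j
    by_cases h : i = j <;>
      simp [h, Matrix.map_apply, Matrix.one_apply, hN', Polynomial.map_smul]
  have hLHS : φ ((Matrix.det (N.map Polynomial.C + (X : R[X]) • 1)).coeff 1) =
      (Matrix.det (N'.map Polynomial.C + (X : K[X]) • 1)).coeff 1 := by
    rw [← hmap, ← Polynomial.coeff_map]
    congr 1
    simpa using RingHom.map_det (Polynomial.mapRingHom φ) (N.map Polynomial.C + (X : R[X]) • 1)
  rw [hLHS]
  -- transfer the RHS
  have hRHS : φ (Matrix.adjugate N).trace = (Matrix.adjugate N').trace := by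
    rw [hN', ← RingHom.mapMatrix_apply, ← RingHom.map_adjugate, RingHom.mapMatrix_apply,
      trace_map_ringHom]
  rw [hRHS]
  -- now work over the field K
  have hfac : N'.map Polynomial.C + (X : K[X]) • 1 =
      N'.map Polynomial.C * (1 + (X : K[X]) • (N'⁻¹).map Polynomial.C) := by
    rw [mul_add, mul_one, Matrix.mul_smul, ← Matrix.map_mul,
      Matrix.mul_nonsing_inv _ hunit]
    simp
  rw [hfac, Matrix.det_mul, ← RingHom.mapMatrix_apply (Polynomial.C : K →+* K[X]),
    ← RingHom.map_det]
  rw [Polynomial.coeff_C_mul, Matrix.coeff_det_one_add_X_smul_one]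
  have hadj : Matrix.adjugate N' = N'.det • N'⁻¹ := by
    rw [Matrix.inv_def, smul_smul, Ring.inverse_eq_inv, mul_inv_cancel₀ hdet0, one_smul]
  rw [hadj, Matrix.trace_smul, smul_eq_mul]

/-- The trace of the adjugate of the characteristic matrix is the derivative of the
characteristic polynomial. -/
private lemma trace_adjugate_charmatrix {F : Type*} [Field F] {n : ℕ}
    (A : Matrix (Fin n) (Fin n) F) :
    (Matrix.adjugate (Matrix.charmatrix A)).trace = derivative (Matrix.charpoly A) := by
  classical
  have hdet : (Matrix.charmatrix A).det = Matrix.charpoly A := rfl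
  have hne : (Matrix.charmatrix A).det ≠ 0 := by
    rw [hdet]; exact (Matrix.charpoly_monic A).ne_zero
  rw [← jacobi_coeff_one (Matrix.charmatrix A) hne]
  -- identify `det (charmatrix A + X • 1)` with the Taylor shift of the charpoly
  set ψ : F[X] →+* (F[X])[X] :=
    Polynomial.eval₂RingHom ((Polynomial.C : F[X] →+* (F[X])[X]).comp
      (Polynomial.C : F →+* F[X])) ((X : (F[X])[X]) + Polynomial.C (X : F[X])) with hψ
  have hmat : (Matrix.charmatrix A).map ψ =
      (Matrix.charmatrix A).map Polynomial.C + (X : (F[X])[X]) • 1 := by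
    ext i j
    by_cases h : i = j
    · subst h
      simp [Matrix.map_apply, hψ, map_sub, Matrix.one_apply]
      ring
    · simp [Matrix.map_apply, hψ, Matrix.charmatrix_apply_ne _ _ _ h, Matrix.one_apply, h]
  have hdet2 : ψ (Matrix.charpoly A) =
      Matrix.det ((Matrix.charmatrix A).map Polynomial.C + (X : (F[X])[X]) • 1) := by
    rw [← hmat, ← hdet, RingHom.map_det]
    rfl
  rw [← hdet2]
  -- relate `ψ P` to the taylor expansion
  have htaylor : ψ (Matrix.charpoly A) =
      Polynomial.taylor (X : F[X]) ((Matrix.charpoly A).map (Polynomial.C : F →+* F[X])) := by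
    rw [Polynomial.taylor_apply, Polynomial.comp, Polynomial.eval₂_map, hψ]
    simp [add_comm]
  rw [htaylor, Polynomial.taylor_coeff_one, Polynomial.derivative_map, Polynomial.eval_map,
    Polynomial.eval₂_C_X]

/-- Writing `adj(X·I − A) = Σ_{k=0}^{n−1} Bₖ Xᵏ` and `P(X) = Σ_{k=0}^{n} p'ₖ Xᵏ` for the
characteristic polynomial, one has `tr(A·B_{k+1}) = (k+1−n)·p'_{k+1}` for `0 ≤ k ≤ n−2`;
in particular, in characteristic zero, `p'_{k+1} = tr(A·B_{k+1})/(k+1−n)`. -/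
theorem trace_mul_adjugate_charmatrix_coeff
    (F : Type*) [Field F] (n : ℕ) (A : Matrix (Fin n) (Fin n) F)
    (B : ℕ → Matrix (Fin n) (Fin n) F)
    (hB : ∀ k, B k = Matrix.of fun i j => ((Matrix.adjugate (Matrix.charmatrix A)) i j).coeff k) :
    (∀ k : ℕ, k + 2 ≤ n →
      (A * B (k + 1)).trace = (((k : F) + 1) - (n : F)) * (Matrix.charpoly A).coeff (k + 1)) ∧
    (CharZero F → ∀ k : ℕ, k + 2 ≤ n →
      (Matrix.charpoly A).coeff (k + 1) = (A * B (k + 1)).trace / (((k : F) + 1) - (n : F))) := by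
  classical
  set adj := Matrix.adjugate (Matrix.charmatrix A) with hadj
  set P := Matrix.charpoly A with hP
  have key : ∀ k : ℕ,
      (A * B (k + 1)).trace = (((k : F) + 1) - (n : F)) * P.coeff (k + 1) := by
    intro k
    -- fundamental identity: charmatrix A * adj = P • 1
    have h1 : Matrix.charmatrix A * adj = P • (1 : Matrix (Fin n) (Fin n) F[X]) := by
      rw [hadj, Matrix.mul_adjugate]; rfl
    have h2 : (X : F[X]) • adj - (Polynomial.C : F →+* F[X]).mapMatrix A * adj =
        P • (1 : Matrix (Fin n) (Fin n) F[X]) := by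
      rw [← h1, Matrix.charmatrix, sub_mul]
      congr 1
      rw [Matrix.scalar_apply, ← Matrix.smul_eq_diagonal_mul]
    -- take traces
    have h3 : (X : F[X]) * adj.trace -
        ((Polynomial.C : F →+* F[X]).mapMatrix A * adj).trace = P * (n : F[X]) := by
      have := congrArg Matrix.trace h2
      rwa [Matrix.trace_sub, Matrix.trace_smul, Matrix.trace_smul, Matrix.trace_one,
        smul_eq_mul, smul_eq_mul, Fintype.card_fin] at this
    -- take the (k+1)-st coefficient
    have h4 := congrArg (fun q => Polynomial.coeff q (k + 1)) h3
    simp only [Polynomial.coeff_sub, Polynomial.coeff_X_mul] at h4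
    have htr : adj.trace = derivative P := trace_adjugate_charmatrix A
    have hcoefftr : (((Polynomial.C : F →+* F[X]).mapMatrix A * adj).trace).coeff (k + 1) =
        (A * B (k + 1)).trace := by
      simp only [Matrix.trace, Matrix.diag, Matrix.mul_apply, Polynomial.finset_sum_coeff,
        RingHom.mapMatrix_apply, Matrix.map_apply, Polynomial.coeff_C_mul, hB,
        Matrix.of_apply]
    have hrhs : (P * (n : F[X])).coeff (k + 1) = P.coeff (k + 1) * (n : F) := by
      have : ((n : ℕ) : F[X]) = Polynomial.C ((n : ℕ) : F) := (Polynomial.C_eq_natCast _).symm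
      rw [this, Polynomial.coeff_mul_C]
    rw [htr, hcoefftr, hrhs, Polynomial.coeff_derivative] at h4
    have : (A * B (k + 1)).trace = P.coeff (k + 1) * ((k : F) + 1) - P.coeff (k + 1) * (n : F) := by
      rw [← h4]; ring
    rw [this]; ring
  refine ⟨fun k _ => key k, fun hC k hk => ?_⟩
  have hne : ((k : F) + 1) - (n : F) ≠ 0 := by
    have h1 : (k + 1 : ℕ) ≠ n := by omega
    have : ((k : F) + 1) ≠ (n : F) := by
      intro h
      apply h1
      exact_mod_cast (by push_cast at h ⊢; exact h : (((k + 1 : ℕ)) : F) = ((n : ℕ) : F))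
    exact sub_ne_zero.mpr this
  rw [key k, mul_div_cancel_left₀ _ hne]
end

section
/- Let F be a field, A an n×n matrix over F, λᵢ ∈ F, and nᵢ ≥ 1 such that (X − λᵢ)^{nᵢ} divides the characteristic polynomial of A. Let B⁽ʲ⁾(λᵢ) denote the entrywise j-th Hasse derivative of adj(X·I − A) evaluated at λᵢ. Then (A − λᵢ·I)·B⁽⁰⁾(λᵢ) = 0 and, for every 1 ≤ j ≤ nᵢ − 1, (A − λᵢ·I)·B⁽ʲ⁾(λᵢ) = B⁽ʲ⁻¹⁾(λᵢ). -/
open Polynomial Matrix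

/-- Suppose `(X − λᵢ)^{nᵢ}` divides the characteristic polynomial of `A`, and let
`B⁽ʲ⁾(λᵢ)` be the entrywise `j`-th Hasse derivative of `adj(X·I − A)` evaluated at `λᵢ`.
Then `(A − λᵢ·I)·B⁽⁰⁾(λᵢ) = 0` and `(A − λᵢ·I)·B⁽ʲ⁾(λᵢ) = B⁽ʲ⁻¹⁾(λᵢ)` for
`1 ≤ j ≤ nᵢ − 1`. -/
theorem hasseDeriv_adjugate_charmatrix_chain
    (F : Type*) [Field F] (n : ℕ) (A : Matrix (Fin n) (Fin n) F) (li : F) (ni : ℕ)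
    (hni : 1 ≤ ni)
    (hdvd : (Polynomial.X - Polynomial.C li) ^ ni ∣ Matrix.charpoly A)
    (B : ℕ → Matrix (Fin n) (Fin n) F)
    (hB : ∀ j, B j = (Matrix.adjugate (Matrix.charmatrix A)).map
              fun p => (Polynomial.hasseDeriv j p).eval li) :
    (A - li • (1 : Matrix (Fin n) (Fin n) F)) * B 0 = 0 ∧
    ∀ j : ℕ, 1 ≤ j → j ≤ ni - 1 →
      (A - li • (1 : Matrix (Fin n) (Fin n) F)) * B j = B (j - 1) := by
  classical
  set Bp := Matrix.adjugate (Matrix.charmatrix A) with hBpdef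
  set t : Fin n → Fin n → Polynomial F := fun i k => Polynomial.taylor li (Bp i k) with ht
  -- entries of B via taylor coefficients
  have hBt : ∀ j i k, B j i k = (t i k).coeff j := by
    intro j i k
    rw [hB j]
    simp [ht, Polynomial.taylor_coeff, Matrix.map_apply]
  -- vanishing taylor coefficients of charpoly
  have hzero : ∀ j < ni, (Polynomial.taylor li (Matrix.charpoly A)).coeff j = 0 := by
    obtain ⟨q, hq⟩ := hdvd
    have h2 : Polynomial.taylor li (Matrix.charpoly A)
        = Polynomial.X ^ ni * Polynomial.taylor li q := by
      conv_lhs => rw [hq]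
      rw [Polynomial.taylor_mul]
      congr 1
      simp [Polynomial.taylor_apply, Polynomial.pow_comp, Polynomial.sub_comp]
    intro j hj
    exact Polynomial.X_pow_dvd_iff.mp ⟨_, h2⟩ j hj
  -- the key polynomial identity, entrywise
  have entry : ∀ i k, Polynomial.X * Bp i k
      - ∑ m, Polynomial.C (A i m) * Bp m k
      = Matrix.charpoly A * (if i = k then 1 else 0) := by
    intro i k
    have hmul := Matrix.mul_adjugate (Matrix.charmatrix A)
    have h := congrFun (congrFun hmul i) k
    rw [Matrix.mul_apply] at h
    simp only [charmatrix_apply, Matrix.smul_apply, Matrix.one_apply,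
      sub_mul, Finset.sum_sub_distrib, Matrix.diagonal_apply, ite_mul, zero_mul,
      Finset.sum_ite_eq, Finset.mem_univ, if_true, smul_eq_mul] at h
    rw [← hBpdef] at h
    rw [h, Matrix.charpoly]
  -- taylor-transformed entry identity, coefficientwise
  have key : ∀ (j : ℕ) (i k : Fin n),
      ((Polynomial.X + Polynomial.C li) * t i k).coeff j
        - ∑ m, A i m * (t m k).coeff j
      = (Polynomial.taylor li (Matrix.charpoly A)).coeff j * (if i = k then 1 else 0) := by
    intro j i k
    have e := entry i k
    by_cases hik : i = k
    · rw [if_pos hik, mul_one] at e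
      have h := congrArg (fun p => ((Polynomial.taylorAlgHom li) p).coeff j) e
      rw [if_pos hik, mul_one]
      simpa only [ht, Polynomial.taylorAlgHom_apply, map_sub, _root_.map_mul, map_sum,
        Polynomial.taylor_X, Polynomial.taylor_C, Polynomial.finset_sum_coeff,
        Polynomial.coeff_C_mul, Polynomial.coeff_sub] using h
    · rw [if_neg hik, mul_zero] at e
      have h := congrArg (fun p => ((Polynomial.taylorAlgHom li) p).coeff j) e
      rw [if_neg hik, mul_zero]
      simpa only [ht, Polynomial.taylorAlgHom_apply, map_sub, _root_.map_mul, map_sum,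
        map_zero, Polynomial.coeff_zero, Polynomial.taylor_X, Polynomial.taylor_C,
        Polynomial.finset_sum_coeff, Polynomial.coeff_C_mul, Polynomial.coeff_sub] using h
  constructor
  · ext i k
    have h := key 0 i k
    rw [hzero 0 (lt_of_lt_of_le Nat.zero_lt_one hni), zero_mul] at h
    have hc : ((Polynomial.X + Polynomial.C li) * t i k).coeff 0
        = li * (t i k).coeff 0 := by
      rw [add_mul, Polynomial.coeff_add, Polynomial.coeff_C_mul]
      simp [Polynomial.mul_coeff_zero]
    rw [hc] at h
    simp only [Matrix.mul_apply, Matrix.sub_apply, Matrix.smul_apply, Matrix.one_apply,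
      sub_mul, Finset.sum_sub_distrib, smul_eq_mul, mul_ite, mul_one, mul_zero,
      ite_mul, zero_mul, Finset.sum_ite_eq, Finset.mem_univ, if_true, Matrix.zero_apply]
    simp only [hBt]
    linear_combination (-1 : F) * h
  · intro j hj hj'
    ext i k
    have h := key j i k
    have hjni : j < ni := lt_of_le_of_lt hj' (Nat.sub_lt (lt_of_lt_of_le Nat.zero_lt_one hni) Nat.zero_lt_one)
    rw [hzero j hjni, zero_mul] at h
    obtain ⟨j', rfl⟩ : ∃ j', j = j' + 1 := ⟨j - 1, (Nat.succ_pred_eq_of_pos hj).symm⟩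
    have hc : ((Polynomial.X + Polynomial.C li) * t i k).coeff (j' + 1)
        = (t i k).coeff j' + li * (t i k).coeff (j' + 1) := by
      rw [add_mul, Polynomial.coeff_add, Polynomial.coeff_C_mul, Polynomial.coeff_X_mul]
    rw [hc] at h
    simp only [Matrix.mul_apply, Matrix.sub_apply, Matrix.smul_apply, Matrix.one_apply,
      sub_mul, Finset.sum_sub_distrib, smul_eq_mul, mul_ite, mul_one, mul_zero,
      ite_mul, zero_mul, Finset.sum_ite_eq, Finset.mem_univ, if_true]
    simp only [hBt, Nat.add_sub_cancel]
    linear_combination (-1 : F) * h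
end

section
/- Let F be a field, A an n×n matrix over F, λᵢ ∈ F, nᵢ ≥ 1, and suppose the characteristic polynomial factors as P(X) = (X − λᵢ)^{nᵢ}·R(X) with R ∈ F[X]. Let B⁽ʲ⁾(λᵢ) denote the entrywise j-th Hasse derivative of adj(X·I − A) evaluated at λᵢ. Then (A − λᵢ·I)·B⁽ⁿⁱ⁾(λᵢ) − B⁽ⁿⁱ⁻¹⁾(λᵢ) = −R(λᵢ)·I. -/
open Polynomial Matrix

/-- Suppose the characteristic polynomial factors as `P(X) = (X − λᵢ)^{nᵢ}·R(X)`, and let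
`B⁽ʲ⁾(λᵢ)` be the entrywise `j`-th Hasse derivative of `adj(X·I − A)` evaluated at `λᵢ`.
Then `(A − λᵢ·I)·B⁽ⁿⁱ⁾(λᵢ) − B⁽ⁿⁱ⁻¹⁾(λᵢ) = −R(λᵢ)·I`. -/
theorem hasseDeriv_adjugate_charmatrix_top_relation
    (F : Type*) [Field F] (n : ℕ) (A : Matrix (Fin n) (Fin n) F) (li : F) (ni : ℕ)
    (hni : 1 ≤ ni) (R : Polynomial F)
    (hP : Matrix.charpoly A = (Polynomial.X - Polynomial.C li) ^ ni * R)
    (B : ℕ → Matrix (Fin n) (Fin n) F)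
    (hB : ∀ j, B j = (Matrix.adjugate (Matrix.charmatrix A)).map
              fun p => (Polynomial.hasseDeriv j p).eval li) :
    (A - li • (1 : Matrix (Fin n) (Fin n) F)) * B ni - B (ni - 1) =
      -(R.eval li) • (1 : Matrix (Fin n) (Fin n) F) := by
  obtain ⟨nj, rfl⟩ : ∃ j, ni = j + 1 := ⟨ni - 1, (Nat.succ_pred_eq_of_pos hni).symm⟩
  set M := Matrix.adjugate (Matrix.charmatrix A) with hM
  have hchar : charmatrix A * M = charpoly A • (1 : Matrix (Fin n) (Fin n) F[X]) := by
    rw [hM, Matrix.mul_adjugate]; rfl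
  ext i k
  have hBe : ∀ j m, B j m k = (Polynomial.taylor li (M m k)).coeff j := by
    intro j m
    rw [hB j, Polynomial.taylor_coeff]
    rfl
  have hkey : ∑ m, charmatrix A i m * M m k = charpoly A * (if i = k then 1 else 0) := by
    have := congrFun (congrFun hchar i) k
    simpa [Matrix.mul_apply, Matrix.smul_apply, Matrix.one_apply, mul_ite] using this
  have h2 := congrArg (fun p => (Polynomial.taylor li p).coeff (nj + 1)) hkey
  simp only [map_sum, Polynomial.finset_sum_coeff] at h2
  have hterm : ∀ m, (Polynomial.taylor li (charmatrix A i m * M m k)).coeff (nj + 1)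
      = (if i = m then B nj m k + li * B (nj + 1) m k else 0) - A i m * B (nj + 1) m k := by
    intro m
    rw [Polynomial.taylor_mul]
    by_cases h : i = m
    · subst h
      rw [charmatrix_apply_eq, map_sub, Polynomial.taylor_X, Polynomial.taylor_C]
      have hexp : (X + C li - C (A i i)) * Polynomial.taylor li (M i k)
          = X * Polynomial.taylor li (M i k) + C li * Polynomial.taylor li (M i k)
            - C (A i i) * Polynomial.taylor li (M i k) := by ring
      rw [hexp, Polynomial.coeff_sub, Polynomial.coeff_add, Polynomial.coeff_X_mul,
        Polynomial.coeff_C_mul, Polynomial.coeff_C_mul]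
      simp [hBe]
    · rw [charmatrix_apply_ne A i m h, map_neg, Polynomial.taylor_C]
      simp [hBe, h]
  -- RHS value
  have hR : (Polynomial.taylor li (charpoly A)).coeff (nj + 1) = R.eval li := by
    rw [hP, Polynomial.taylor_apply, Polynomial.mul_comp, Polynomial.pow_comp,
      Polynomial.sub_comp, Polynomial.X_comp, Polynomial.C_comp, add_sub_cancel_right,
      ← Polynomial.taylor_apply]
    have := Polynomial.coeff_X_pow_mul (Polynomial.taylor li R) (nj + 1) 0
    rw [zero_add] at this
    rw [this, Polynomial.taylor_coeff, Polynomial.hasseDeriv_zero]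
    rfl
  simp only [hterm] at h2
  rw [Finset.sum_sub_distrib, Finset.sum_ite_eq (Finset.univ : Finset (Fin n)) i
      (fun m => B nj m k + li * B (nj + 1) m k)] at h2
  simp only [Finset.mem_univ, if_true] at h2
  -- now translate goal
  have hgoal : ((A - li • (1 : Matrix (Fin n) (Fin n) F)) * B (nj + 1) - B nj) i k
      = ∑ m, A i m * B (nj + 1) m k - li * B (nj + 1) i k - B nj i k := by
    simp [Matrix.sub_apply, Matrix.mul_apply, Matrix.smul_apply, Matrix.one_apply,
      sub_mul, Finset.sum_sub_distrib, ite_mul, Finset.sum_ite_eq]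
  rw [Nat.add_sub_cancel, hgoal]
  rw [mul_ite, mul_one, mul_zero] at h2
  by_cases hik : i = k
  · subst hik
    rw [if_pos rfl, hR] at h2
    simp only [Matrix.smul_apply, Matrix.one_apply_eq, smul_eq_mul, mul_one]
    linear_combination -h2
  · rw [if_neg hik] at h2
    simp only [map_zero, Polynomial.coeff_zero] at h2
    simp only [Matrix.smul_apply, Matrix.one_apply, if_neg hik, smul_eq_mul, mul_zero]
    linear_combination -h2
end

section
/- Let F be a field, A an n×n matrix over F, λᵢ ∈ F, and nᵢ ≥ 1 such that (X − λᵢ)^{nᵢ} divides the characteristic polynomial of A. Let B⁽ⁿⁱ⁻¹⁾(λᵢ) be the entrywise (nᵢ−1)-th Hasse derivative of adj(X·I − A) evaluated at λᵢ. Then the column space (range) of B⁽ⁿⁱ⁻¹⁾(λᵢ) is contained in the kernel of (A − λᵢ·I)^{nᵢ}: for every vector u, (A − λᵢ·I)^{nᵢ} · B⁽ⁿⁱ⁻¹⁾(λᵢ) · u = 0. -/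
open Polynomial Matrix

/-- Suppose `(X − λᵢ)^{nᵢ}` divides the characteristic polynomial of `A`, and let
`B⁽ⁿⁱ⁻¹⁾(λᵢ)` be the entrywise `(nᵢ−1)`-th Hasse derivative of `adj(X·I − A)` evaluated
at `λᵢ`.  Then the range of `B⁽ⁿⁱ⁻¹⁾(λᵢ)` is contained in `ker (A − λᵢ·I)^{nᵢ}`. -/
theorem range_hasseDeriv_adjugate_subset_genEigenspace
    (F : Type*) [Field F] (n : ℕ) (A : Matrix (Fin n) (Fin n) F) (li : F) (ni : ℕ)
    (hni : 1 ≤ ni)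
    (hdvd : (Polynomial.X - Polynomial.C li) ^ ni ∣ Matrix.charpoly A) :
    ∀ u : Fin n → F,
      ((A - li • (1 : Matrix (Fin n) (Fin n) F)) ^ ni).mulVec
        (((Matrix.adjugate (Matrix.charmatrix A)).map
            (fun p => (Polynomial.hasseDeriv (ni - 1) p).eval li)).mulVec u) = 0 := by
  intro u
  set f : F[X] → F := fun p => (Polynomial.hasseDeriv (ni - 1) p).eval li with hf
  set t : F[X] := X - C li with ht
  set M : Matrix (Fin n) (Fin n) F[X] := charmatrix A with hM
  set N : Matrix (Fin n) (Fin n) F[X] := (A - li • 1).map C with hN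
  set S : Matrix (Fin n) (Fin n) F[X] := t • 1 with hS
  -- N = S - M
  have hNS : N = S - M := by
    refine Matrix.ext fun i j => ?_
    by_cases h : i = j
    · subst h
      simp only [hN, hS, hM, ht, Matrix.map_apply, Matrix.sub_apply, Matrix.smul_apply,
        Matrix.one_apply_eq, charmatrix_apply_eq, smul_eq_mul, mul_one, map_sub]
      ring
    · simp only [hN, hS, hM, ht, Matrix.map_apply, Matrix.sub_apply, Matrix.smul_apply,
        Matrix.one_apply_ne h, charmatrix_apply_ne _ _ _ h, smul_eq_mul, mul_zero, map_sub,
        map_zero, sub_zero]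
      ring
  -- entries of M * adjugate M are divisible by t ^ ni
  have hMadj : ∀ i j, t ^ ni ∣ (M * adjugate M) i j := by
    intro i j
    rw [Matrix.mul_adjugate]
    have hdet : M.det = Matrix.charpoly A := rfl
    by_cases h : i = j
    · subst h
      simpa [Matrix.smul_apply, Matrix.one_apply, hdet] using hdvd
    · simp [Matrix.smul_apply, Matrix.one_apply_ne h]
  -- divisibility closed under left multiplication
  have Dmul : ∀ (P Q : Matrix (Fin n) (Fin n) F[X]),
      (∀ i j, t ^ ni ∣ Q i j) → ∀ i j, t ^ ni ∣ (P * Q) i j := by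
    intro P Q h i j
    rw [Matrix.mul_apply]
    exact Finset.dvd_sum fun k _ => Dvd.dvd.mul_left (h k j) _
  -- key induction
  have key : ∀ k, ∀ i j, t ^ ni ∣ (N ^ k * adjugate M - S ^ k * adjugate M) i j := by
    intro k
    induction k with
    | zero => simp
    | succ k ih =>
      have expand : N ^ (k + 1) * adjugate M - S ^ (k + 1) * adjugate M
          = N * (N ^ k * adjugate M - S ^ k * adjugate M)
            + (N - S) * (S ^ k * adjugate M) := by
        rw [pow_succ', pow_succ', Matrix.mul_sub, Matrix.sub_mul, mul_assoc, mul_assoc]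
        abel
      intro i j
      rw [expand]
      have h1 : ∀ i j, t ^ ni ∣ (N * (N ^ k * adjugate M - S ^ k * adjugate M)) i j :=
        Dmul _ _ ih
      have hSc : S ^ k = t ^ k • (1 : Matrix (Fin n) (Fin n) F[X]) := by
        rw [hS, _root_.smul_pow, one_pow]
      have hcomm : (N - S) * (S ^ k * adjugate M) = t ^ k • ((N - S) * adjugate M) := by
        rw [hSc, Matrix.smul_mul, Matrix.one_mul, Matrix.mul_smul]
      have hNSM : (N - S) * adjugate M = -(M * adjugate M) := by
        rw [hNS]; rw [sub_sub_cancel_left, Matrix.neg_mul]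
      have h2 : ∀ i j, t ^ ni ∣ ((N - S) * (S ^ k * adjugate M)) i j := by
        intro i j
        rw [hcomm, hNSM, Matrix.smul_apply, Matrix.neg_apply, smul_eq_mul]
        exact Dvd.dvd.mul_left (dvd_neg.mpr (hMadj i j)) _
      rw [Matrix.add_apply]
      exact dvd_add (h1 i j) (h2 i j)
  -- hence entries of N ^ ni * adjugate M are divisible by t ^ ni
  have hdvd' : ∀ i j, t ^ ni ∣ (N ^ ni * adjugate M) i j := by
    intro i j
    have h1 := key ni i j
    have h2 : t ^ ni ∣ (S ^ ni * adjugate M) i j := by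
      have hSc : S ^ ni = t ^ ni • (1 : Matrix (Fin n) (Fin n) F[X]) := by
        rw [hS, _root_.smul_pow, one_pow]
      rw [hSc, Matrix.smul_mul, Matrix.one_mul, Matrix.smul_apply, smul_eq_mul]
      exact Dvd.intro _ rfl
    have := dvd_add h1 h2
    rwa [Matrix.sub_apply, sub_add_cancel] at this
  -- f kills multiples of t ^ ni
  have hfkill : ∀ p : F[X], t ^ ni ∣ p → f p = 0 := by
    intro p hp
    obtain ⟨q, rfl⟩ := hp
    have : f (t ^ ni * q) = (Polynomial.taylor li (t ^ ni * q)).coeff (ni - 1) := by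
      rw [Polynomial.taylor_coeff]
    have htX : Polynomial.taylor li t = X := by
      rw [ht, map_sub, Polynomial.taylor_X, Polynomial.taylor_C]; ring
    have hpow : ∀ m : ℕ, Polynomial.taylor li (t ^ m) = X ^ m := by
      intro m
      induction m with
      | zero => simp
      | succ m ih => rw [pow_succ, Polynomial.taylor_mul, ih, htX, pow_succ]
    rw [this, Polynomial.taylor_mul, hpow, mul_comm, Polynomial.coeff_mul_X_pow']
    have : ¬ ni ≤ ni - 1 := by omega
    simp [this]
  -- f is linear
  have hfadd : ∀ p q : F[X], f (p + q) = f p + f q := by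
    intro p q; simp [hf]
  have hfC : ∀ (a : F) (p : F[X]), f (C a * p) = a * f p := by
    intro a p
    simp only [hf]
    rw [← Polynomial.smul_eq_C_mul, LinearMap.map_smul, Polynomial.smul_eq_C_mul,
      Polynomial.eval_mul, Polynomial.eval_C]
  -- N ^ ni is the image of (A - li • 1) ^ ni under C
  have hNpow : N ^ ni = ((A - li • (1 : Matrix (Fin n) (Fin n) F)) ^ ni).map C := by
    rw [hN, ← RingHom.mapMatrix_apply, ← RingHom.mapMatrix_apply, ← map_pow]
  -- the matrix product vanishes
  have hzero : (A - li • (1 : Matrix (Fin n) (Fin n) F)) ^ ni * ((adjugate M).map f) = 0 := by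
    ext i j
    have : ((A - li • (1 : Matrix (Fin n) (Fin n) F)) ^ ni * ((adjugate M).map f)) i j
        = f ((N ^ ni * adjugate M) i j) := by
      rw [Matrix.mul_apply, Matrix.mul_apply, hNpow]
      rw [show f (∑ k, (((A - li • (1 : Matrix (Fin n) (Fin n) F)) ^ ni).map C) i k
            * adjugate M k j)
          = ∑ k, f ((((A - li • (1 : Matrix (Fin n) (Fin n) F)) ^ ni).map C) i k
            * adjugate M k j) from map_sum
          (AddMonoidHom.mk' f (fun p q => hfadd p q)) _ _]
      refine Finset.sum_congr rfl fun k _ => ?_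
      simp only [Matrix.map_apply]
      rw [hfC]
    rw [this, hfkill _ (hdvd' i j), Matrix.zero_apply]
  rw [Matrix.mulVec_mulVec, hzero, Matrix.zero_mulVec]
end

section
/- Let F be a field, A an n×n matrix over F, λᵢ ∈ F, nᵢ ≥ 1, and suppose the characteristic polynomial factors as P(X) = (X − λᵢ)^{nᵢ}·R(X) with R(λᵢ) ≠ 0 (i.e. λᵢ is a root of P of exact multiplicity nᵢ). Let B⁽ⁿⁱ⁻¹⁾(λᵢ) be the entrywise (nᵢ−1)-th Hasse derivative of adj(X·I − A) evaluated at λᵢ. Then for every m ∈ ℕ and every vector v with (A − λᵢ·I)^m v = 0, the vector v lies in the range of B⁽ⁿⁱ⁻¹⁾(λᵢ). -/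
open Polynomial Matrix

/-- Suppose the characteristic polynomial factors as `P(X) = (X − λᵢ)^{nᵢ}·R(X)` with
`R(λᵢ) ≠ 0`.  Let `B⁽ⁿⁱ⁻¹⁾(λᵢ)` be the entrywise `(nᵢ−1)`-th Hasse derivative of
`adj(X·I − A)` evaluated at `λᵢ`.  Then every vector of the characteristic space of `A`
at `λᵢ` (i.e. every `v` with `(A − λᵢ·I)^m v = 0` for some `m`) lies in the range of
`B⁽ⁿⁱ⁻¹⁾(λᵢ)`. -/
theorem genEigenvector_mem_range_hasseDeriv_adjugate
    (F : Type*) [Field F] (n : ℕ) (A : Matrix (Fin n) (Fin n) F) (li : F) (ni : ℕ)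
    (hni : 1 ≤ ni) (R : Polynomial F)
    (hP : Matrix.charpoly A = (Polynomial.X - Polynomial.C li) ^ ni * R)
    (hR : R.eval li ≠ 0) :
    ∀ (m : ℕ) (v : Fin n → F),
      ((A - li • (1 : Matrix (Fin n) (Fin n) F)) ^ m).mulVec v = 0 →
      ∃ u : Fin n → F,
        ((Matrix.adjugate (Matrix.charmatrix A)).map
            (fun p => (Polynomial.hasseDeriv (ni - 1) p).eval li)).mulVec u = v := by
  intro m v hv
  set A' : Matrix (Fin n) (Fin n) F := A - li • 1 with hA'def
  set t : Polynomial F →+* Polynomial F := (taylorAlgHom li).toRingHom with ht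
  have htapp : ∀ p : Polynomial F, t p = taylor li p := fun p => rfl
  set q : (Matrix (Fin n) (Fin n) F)[X] :=
    matPolyEquiv ((adjugate (charmatrix A)).map t) with hq
  -- The Hasse-derivative matrices are the coefficients of `q`.
  have hB : ∀ j : ℕ, ((Matrix.adjugate (Matrix.charmatrix A)).map
      (fun p => (Polynomial.hasseDeriv j p).eval li)) = q.coeff j := by
    intro j
    ext i k
    rw [hq, matPolyEquiv_coeff_apply, Matrix.map_apply, Matrix.map_apply, htapp,
      taylor_coeff]
  -- Taylor shift of the charmatrix.
  have hcm : (charmatrix A).map t = charmatrix A' := by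
    ext i k
    by_cases h : i = k
    · subst h
      simp only [Matrix.map_apply, charmatrix_apply_eq, htapp, map_sub, taylor_X, taylor_C,
        hA'def, Matrix.sub_apply, Matrix.smul_apply, Matrix.one_apply_eq, smul_eq_mul, mul_one,
        C_sub]
      ring
    · simp only [Matrix.map_apply, charmatrix_apply_ne _ _ _ h, htapp, map_neg, taylor_C,
        hA'def, Matrix.sub_apply, Matrix.smul_apply, Matrix.one_apply_ne h, smul_eq_mul,
        mul_zero, sub_zero]
  have hsmul1 : ((Matrix.charpoly A) • (1 : Matrix (Fin n) (Fin n) (Polynomial F))).map t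
      = (taylor li (Matrix.charpoly A)) • (1 : Matrix (Fin n) (Fin n) (Polynomial F)) := by
    ext i k
    by_cases h : i = k
    · subst h; simp [Matrix.map_apply, htapp]
    · simp [Matrix.map_apply, Matrix.one_apply_ne h]
  -- The two adjugate identities, transported through `matPolyEquiv`.
  have h1 : q * (X - C A') = (taylor li (Matrix.charpoly A)).map
      (algebraMap F (Matrix (Fin n) (Fin n) F)) := by
    have e1 : (adjugate (charmatrix A)).map t * charmatrix A'
        = (taylor li (Matrix.charpoly A)) • (1 : Matrix (Fin n) (Fin n) (Polynomial F)) := by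
      rw [← hcm, ← Matrix.map_mul, Matrix.adjugate_mul, ← hsmul1]
      rfl
    have := congrArg matPolyEquiv e1
    rwa [_root_.map_mul, matPolyEquiv_charmatrix, matPolyEquiv_smul_one, ← hq] at this
  have h2 : (X - C A') * q = (taylor li (Matrix.charpoly A)).map
      (algebraMap F (Matrix (Fin n) (Fin n) F)) := by
    have e1 : charmatrix A' * (adjugate (charmatrix A)).map t
        = (taylor li (Matrix.charpoly A)) • (1 : Matrix (Fin n) (Fin n) (Polynomial F)) := by
      rw [← hcm, ← Matrix.map_mul, Matrix.mul_adjugate, ← hsmul1]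
      rfl
    have := congrArg matPolyEquiv e1
    rwa [_root_.map_mul, matPolyEquiv_charmatrix, matPolyEquiv_smul_one, ← hq] at this
  -- The relevant Taylor coefficient of the characteristic polynomial.
  have hc : (taylor li (Matrix.charpoly A)).coeff ni = R.eval li := by
    rw [hP, ← htapp, _root_.map_mul, map_pow]
    have hx : t (X - C li : Polynomial F) = X := by
      simp [htapp, taylor_X, taylor_C]
    rw [hx, htapp]
    simpa [taylor_coeff_zero] using coeff_X_pow_mul (taylor li R) ni 0
  obtain ⟨j, hj⟩ : ∃ j, ni = j + 1 := ⟨ni - 1, (Nat.succ_pred_eq_of_pos hni).symm⟩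
  have hnij : ni - 1 = j := by omega
  -- Extract the coefficient identity `B_{ni-1} - B_ni * A' = r • 1`.
  have key : q.coeff j - q.coeff ni * A' = (R.eval li) • (1 : Matrix (Fin n) (Fin n) F) := by
    have := congrArg (fun p => p.coeff ni) h1
    simp only [mul_sub, coeff_sub, coeff_map] at this
    rw [hj, coeff_mul_X, coeff_mul_C, ← hj, hc] at this
    rw [this, Algebra.algebraMap_eq_smul_one]
  have keyl : q.coeff j - A' * q.coeff ni = (R.eval li) • (1 : Matrix (Fin n) (Fin n) F) := by
    have := congrArg (fun p => p.coeff ni) h2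
    simp only [sub_mul, coeff_sub, coeff_map] at this
    rw [hj, coeff_X_mul, coeff_C_mul, ← hj, hc] at this
    rw [this, Algebra.algebraMap_eq_smul_one]
  have hcomm : Commute (q.coeff ni) A' :=
    sub_right_inj.mp (key.trans keyl.symm)
  set r : F := R.eval li with hr
  set C2 : Matrix (Fin n) (Fin n) F := q.coeff ni * A' with hC2
  have hBm : q.coeff j = r • (1 : Matrix (Fin n) (Fin n) F) + C2 := by
    rw [← key]; abel
  -- C2 ^ m kills v
  have hC2m : (C2 ^ m).mulVec v = 0 := by
    rw [hC2, hcomm.mul_pow, ← Matrix.mulVec_mulVec, hv, Matrix.mulVec_zero]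
  -- the preimage
  set f : ℕ → (Fin n → F) := fun k => ((-1 : F) ^ k / r ^ k) • (C2 ^ k).mulVec v with hf
  refine ⟨∑ k ∈ Finset.range m, ((-1 : F) ^ k / r ^ (k + 1)) • (C2 ^ k).mulVec v, ?_⟩
  rw [hB, hnij, hBm]
  have expand : ∀ w : Fin n → F,
      (r • (1 : Matrix (Fin n) (Fin n) F) + C2).mulVec w = r • w + C2.mulVec w := by
    intro w
    rw [Matrix.add_mulVec, Matrix.smul_mulVec, Matrix.one_mulVec]
  have mv_sum : ∀ (w : ℕ → (Fin n → F)),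
      C2.mulVec (∑ k ∈ Finset.range m, w k) = ∑ k ∈ Finset.range m, C2.mulVec (w k) := by
    intro w
    exact map_sum (Matrix.mulVecLin C2) w (Finset.range m)
  rw [expand, Finset.smul_sum, mv_sum]
  have step : ∀ k : ℕ, r • (((-1 : F) ^ k / r ^ (k + 1)) • (C2 ^ k).mulVec v)
      + C2.mulVec (((-1 : F) ^ k / r ^ (k + 1)) • (C2 ^ k).mulVec v) = f k - f (k + 1) := by
    intro k
    rw [Matrix.mulVec_smul, Matrix.mulVec_mulVec, ← pow_succ']
    rw [hf]
    simp only [smul_smul]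
    have s2 : ((-1 : F) ^ (k + 1) / r ^ (k + 1)) = -((-1 : F) ^ k / r ^ (k + 1)) := by
      rw [pow_succ]; ring
    have s1 : r * ((-1 : F) ^ k / r ^ (k + 1)) = (-1 : F) ^ k / r ^ k := by
      rw [pow_succ']
      field_simp
    rw [s2, neg_smul, sub_neg_eq_add, s1]
  calc (∑ k ∈ Finset.range m, r • (((-1 : F) ^ k / r ^ (k + 1)) • (C2 ^ k).mulVec v))
        + ∑ k ∈ Finset.range m, C2.mulVec (((-1 : F) ^ k / r ^ (k + 1)) • (C2 ^ k).mulVec v)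
      = ∑ k ∈ Finset.range m, (f k - f (k + 1)) := by
        rw [← Finset.sum_add_distrib]
        exact Finset.sum_congr rfl fun k _ => step k
    _ = f 0 - f m := Finset.sum_range_sub' f m
    _ = v := by
        rw [hf]
        simp only [pow_zero]
        rw [hC2m]
        simp
end

section
/- Let F be a field, A an n×n matrix over F, λᵢ ∈ F, nᵢ ≥ 1, and suppose the characteristic polynomial factors as P(X) = (X − λᵢ)^{nᵢ}·R(X) with R(λᵢ) ≠ 0. Let B⁽ⁿⁱ⁻¹⁾(λᵢ) be the entrywise (nᵢ−1)-th Hasse derivative of adj(X·I − A) evaluated at λᵢ. Then the range of B⁽ⁿⁱ⁻¹⁾(λᵢ) equals the characteristic space of A associated to λᵢ, namely ker (A − λᵢ·I)^{nᵢ}. -/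
open Polynomial Matrix

/-- Suppose the characteristic polynomial factors as `P(X) = (X − λᵢ)^{nᵢ}·R(X)` with
`R(λᵢ) ≠ 0`.  Let `B⁽ⁿⁱ⁻¹⁾(λᵢ)` be the entrywise `(nᵢ−1)`-th Hasse derivative of
`adj(X·I − A)` evaluated at `λᵢ`.  Then the range of `B⁽ⁿⁱ⁻¹⁾(λᵢ)` equals the
characteristic space `ker (A − λᵢ·I)^{nᵢ}` of `A` at `λᵢ`. -/
theorem range_hasseDeriv_adjugate_eq_genEigenspace
    (F : Type*) [Field F] (n : ℕ) (A : Matrix (Fin n) (Fin n) F) (li : F) (ni : ℕ)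
    (hni : 1 ≤ ni) (R : Polynomial F)
    (hP : Matrix.charpoly A = (Polynomial.X - Polynomial.C li) ^ ni * R)
    (hR : R.eval li ≠ 0) :
    LinearMap.range
        (Matrix.mulVecLin
          ((Matrix.adjugate (Matrix.charmatrix A)).map
            fun p => (Polynomial.hasseDeriv (ni - 1) p).eval li)) =
      LinearMap.ker
        (Matrix.mulVecLin ((A - li • (1 : Matrix (Fin n) (Fin n) F)) ^ ni)) := by
  classical
  set A' : Matrix (Fin n) (Fin n) F := A - li • 1 with hA'
  set φ : F[X] →ₐ[F] F[X] := aeval (X + C li) with hφ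
  have hφ_taylor : ∀ p : F[X], φ p = taylor li p := by
    intro p
    simp [hφ, taylor_apply, Polynomial.comp, aeval_def, Polynomial.algebraMap_eq]
  -- charmatrix transforms correctly
  have hcm : (charmatrix A).map φ = charmatrix A' := by
    refine Matrix.ext fun i j => ?_
    by_cases h : i = j
    · subst h
      simp only [Matrix.map_apply, charmatrix_apply_eq, hφ, map_sub, aeval_X, aeval_C,
        Polynomial.algebraMap_eq, hA', Matrix.sub_apply, Matrix.smul_apply,
        Matrix.one_apply_eq, smul_eq_mul, mul_one, C_sub]
      ring
    · simp only [Matrix.map_apply, charmatrix_apply_ne _ _ _ h, hφ, map_neg, aeval_C,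
        Polynomial.algebraMap_eq, hA', Matrix.sub_apply, Matrix.smul_apply,
        Matrix.one_apply_ne h, smul_eq_mul, mul_zero, sub_zero]
  have hadj : (adjugate (charmatrix A)).map φ = adjugate (charmatrix A') := by
    have h := AlgHom.map_adjugate φ (charmatrix A)
    simpa [AlgHom.mapMatrix_apply, hcm] using h
  set R' : F[X] := φ R with hR'def
  have hcp : charpoly A' = X ^ ni * R' := by
    have hdet : charpoly A' = φ (charpoly A) := by
      rw [Matrix.charpoly, Matrix.charpoly, ← hcm]
      exact (RingHom.map_det φ.toRingHom (charmatrix A)).symm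
    rw [hdet, hP, _root_.map_mul, map_pow, map_sub, hφ, aeval_X, aeval_C,
      Polynomial.algebraMap_eq, add_sub_cancel_right, hR'def, hφ]
  have hR0 : R'.coeff 0 ≠ 0 := by
    rw [coeff_zero_eq_eval_zero, hR'def, hφ_taylor, taylor_eval]
    simpa using hR
  set b : (Matrix (Fin n) (Fin n) F)[X] := matPolyEquiv (adjugate (charmatrix A')) with hb
  have hmatch : ((adjugate (charmatrix A)).map fun p => (hasseDeriv (ni - 1) p).eval li)
      = b.coeff (ni - 1) := by
    ext i j
    rw [Matrix.map_apply, ← taylor_coeff, ← hφ_taylor, hb, matPolyEquiv_coeff_apply,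
      ← hadj, Matrix.map_apply]
  have hmul1 : (X - Polynomial.C A') * b
      = (charpoly A').map (algebraMap F (Matrix (Fin n) (Fin n) F)) := by
    have h := Matrix.mul_adjugate (charmatrix A')
    have h2 := congrArg matPolyEquiv h
    simpa [_root_.map_mul, matPolyEquiv_charmatrix, matPolyEquiv_smul_one, Matrix.charpoly] using h2
  have hmul2 : b * (X - Polynomial.C A')
      = (charpoly A').map (algebraMap F (Matrix (Fin n) (Fin n) F)) := by
    have h := Matrix.adjugate_mul (charmatrix A')
    have h2 := congrArg matPolyEquiv h
    simpa [_root_.map_mul, matPolyEquiv_charmatrix, matPolyEquiv_smul_one, Matrix.charpoly] using h2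
  have hcommb : Polynomial.C A' * b = b * Polynomial.C A' := by
    have h1 : (X - Polynomial.C A') * b = b * (X - Polynomial.C A') := by rw [hmul1, hmul2]
    rw [sub_mul, mul_sub, X_mul] at h1
    exact sub_right_inj.mp h1
  have hcomm : ∀ k, A' * b.coeff k = b.coeff k * A' := by
    intro k
    have h := congrArg (fun p => p.coeff k) hcommb
    simpa [coeff_C_mul, coeff_mul_C] using h
  have hcoeffP : ∀ k, (charpoly A').coeff k
      = if ni ≤ k then R'.coeff (k - ni) else 0 := by
    intro k
    rw [hcp, coeff_X_pow_mul']
  have hrel : ∀ k, b.coeff k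
      = (charpoly A').coeff (k + 1) • (1 : Matrix (Fin n) (Fin n) F)
        + A' * b.coeff (k + 1) := by
    intro k
    have h := congrArg (fun p => p.coeff (k + 1)) hmul1
    simp only [coeff_sub, sub_mul, coeff_X_mul, coeff_C_mul, coeff_map,
      Algebra.algebraMap_eq_smul_one] at h
    rw [sub_eq_iff_eq_add] at h
    exact h
  have hB0 : A' * b.coeff 0 = 0 := by
    have h := congrArg (fun p => p.coeff 0) hmul1
    simp only [coeff_sub, sub_mul, mul_coeff_zero, coeff_X_zero, zero_mul,
      coeff_C_mul, coeff_map] at h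
    have hc0 : (charpoly A').coeff 0 = 0 := by
      rw [hcoeffP]
      rw [if_neg (by omega)]
    rw [hc0] at h
    simpa using h.symm
  have h1 : ∀ k, k < ni → A' ^ (k + 1) * b.coeff k = 0 := by
    intro k
    induction k with
    | zero => intro _; simpa using hB0
    | succ k ih =>
      intro hk
      have hc : (charpoly A').coeff (k + 1) = 0 := by
        rw [hcoeffP, if_neg (by omega)]
      have hr := hrel k
      rw [hc, zero_smul, zero_add] at hr
      calc A' ^ (k + 1 + 1) * b.coeff (k + 1)
          = A' ^ (k + 1) * (A' * b.coeff (k + 1)) := by rw [pow_succ, mul_assoc]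
        _ = A' ^ (k + 1) * b.coeff k := by rw [← hr]
        _ = 0 := ih (by omega)
  have hBni : A' ^ ni * b.coeff (ni - 1) = 0 := by
    have h := h1 (ni - 1) (by omega)
    have e : ni - 1 + 1 = ni := by omega
    rwa [e] at h
  have h2 : ∀ m, b.coeff (ni - 1)
      = (∑ j ∈ Finset.range m, R'.coeff j • A' ^ j)
        + A' ^ m * b.coeff (ni - 1 + m) := by
    intro m
    induction m with
    | zero => simp
    | succ m ih =>
      rw [ih]
      have hc : (charpoly A').coeff (ni - 1 + m + 1) = R'.coeff m := by
        rw [hcoeffP, if_pos (by omega)]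
        congr 1
        omega
      have hr := hrel (ni - 1 + m)
      rw [hr, hc, Finset.sum_range_succ]
      have e : ni - 1 + (m + 1) = ni - 1 + m + 1 := by omega
      rw [e, mul_add, mul_smul_comm, mul_one]
      rw [show A' ^ m * (A' * b.coeff (ni - 1 + m + 1))
          = A' ^ (m + 1) * b.coeff (ni - 1 + m + 1) by rw [pow_succ, mul_assoc]]
      abel
  -- Bezout
  set s : F[X] := ∑ j ∈ Finset.range ni, C (R'.coeff j) * X ^ j with hs
  have hs0 : s.coeff 0 = R'.coeff 0 := by
    rw [hs, finset_sum_coeff]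
    rw [Finset.sum_eq_single 0]
    · simp
    · intro j hj hj0
      simp [coeff_X_pow, hj0, Ne.symm hj0]
    · intro h0
      exact absurd (Finset.mem_range.2 (by omega)) h0
  have hXs : IsCoprime (X : F[X]) s := by
    obtain ⟨d, hdiv⟩ : ∃ d, X * d + C (s.coeff 0) = s := ⟨s.divX, X_mul_divX_add s⟩
    refine ⟨-(C (R'.coeff 0)⁻¹) * d, C (R'.coeff 0)⁻¹, ?_⟩
    have hC : C (R'.coeff 0)⁻¹ * C (R'.coeff 0) = 1 := by
      rw [← C_mul, inv_mul_cancel₀ hR0, C_1]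
    rw [← hdiv, hs0]
    linear_combination hC
  obtain ⟨u, w, huw⟩ := (hXs.pow_left : IsCoprime ((X : F[X]) ^ ni) s)
  set S' : Matrix (Fin n) (Fin n) F := ∑ j ∈ Finset.range ni, R'.coeff j • A' ^ j with hS'
  have haevals : aeval A' s = S' := by
    rw [hs, map_sum, hS']
    refine Finset.sum_congr rfl fun j _ => ?_
    rw [_root_.map_mul, aeval_C, map_pow, aeval_X, Algebra.smul_def]
  set W : Matrix (Fin n) (Fin n) F := aeval A' w with hW
  set U : Matrix (Fin n) (Fin n) F := aeval A' u with hU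
  have hWS : W * S' = 1 - U * A' ^ ni := by
    have h := congrArg (aeval A' : F[X] →ₐ[F] Matrix (Fin n) (Fin n) F) huw
    simp only [map_add, _root_.map_mul, map_pow, aeval_X, _root_.map_one, haevals] at h
    exact eq_sub_of_add_eq' h
  -- final set equality
  rw [hmatch]
  ext v
  simp only [LinearMap.mem_range, LinearMap.mem_ker, Matrix.mulVecLin_apply]
  constructor
  · rintro ⟨x, rfl⟩
    rw [Matrix.mulVec_mulVec, hBni, Matrix.zero_mulVec]
  · intro hv
    refine ⟨W.mulVec v, ?_⟩
    set B' : Matrix (Fin n) (Fin n) F := b.coeff (ni - 1 + ni) with hB'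
    have hbw : b.coeff (ni - 1) = S' + A' ^ ni * B' := h2 ni
    have c2 : W * A' ^ ni = A' ^ ni * W := by
      have h := congrArg (aeval A' : F[X] →ₐ[F] Matrix (Fin n) (Fin n) F)
        (mul_comm w (X ^ ni))
      simpa [_root_.map_mul, map_pow, aeval_X] using h
    have hcB' : A' ^ ni * B' * W = B' * W * A' ^ ni := by
      have c1 : Commute (A' ^ ni) B' := Commute.pow_left (hcomm (ni - 1 + ni)) ni
      calc A' ^ ni * B' * W = B' * A' ^ ni * W := by rw [c1.eq]
        _ = B' * (A' ^ ni * W) := by rw [mul_assoc]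
        _ = B' * (W * A' ^ ni) := by rw [c2]
        _ = B' * W * A' ^ ni := by rw [mul_assoc]
    have hS'W : S' * W = W * S' := by
      have h := congrArg (aeval A' : F[X] →ₐ[F] Matrix (Fin n) (Fin n) F)
        (mul_comm s w)
      simpa [_root_.map_mul, haevals] using h
    rw [Matrix.mulVec_mulVec, hbw, add_mul, hcB', hS'W, hWS, Matrix.add_mulVec,
      Matrix.sub_mulVec, Matrix.one_mulVec, ← Matrix.mulVec_mulVec (M := U),
      ← Matrix.mulVec_mulVec (M := B' * W), hv, Matrix.mulVec_zero,
      Matrix.mulVec_zero, sub_zero, add_zero]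
end

section
/- Let F be a field, A an n×n matrix over F, and j < nᵢ where (X − λᵢ)^{nᵢ} divides the characteristic polynomial of A. Let B⁽ʲ⁾(λᵢ) be the entrywise j-th Hasse derivative of adj(X·I − A) evaluated at λᵢ. Then (A − λᵢ·I)^{j+1} · B⁽ʲ⁾(λᵢ) = 0; thus the columns of B⁽⁰⁾(λᵢ), …, B⁽ⁿⁱ⁻¹⁾(λᵢ) all lie in the characteristic space ker (A − λᵢ·I)^{nᵢ}. -/
open Polynomial Matrix

section Aux

variable {F : Type*} [Field F]

private lemma hasseDeriv_eval_X_mul (li : F) (p : F[X]) (k : ℕ) :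
    (hasseDeriv (k + 1) (X * p)).eval li =
      (hasseDeriv k p).eval li + li * (hasseDeriv (k + 1) p).eval li := by
  rw [← taylor_coeff, ← taylor_coeff, ← taylor_coeff, taylor_mul, taylor_X, add_mul,
    coeff_add, coeff_X_mul, C_mul_coeff li (taylor li p) (k + 1)]
  where C_mul_coeff (r : F) (q : F[X]) (m : ℕ) : (C r * q).coeff m = r * q.coeff m :=
    coeff_C_mul q

private lemma hasseDeriv_eval_C_mul (li a : F) (p : F[X]) (k : ℕ) :
    (hasseDeriv k (C a * p)).eval li = a * (hasseDeriv k p).eval li := by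
  rw [← taylor_coeff, ← taylor_coeff, taylor_mul, taylor_C, coeff_C_mul]

private lemma hasseDeriv_eval_of_pow_dvd (li : F) (P : F[X]) (ni k : ℕ)
    (hdvd : (X - C li) ^ ni ∣ P) (hk : k < ni) : (hasseDeriv k P).eval li = 0 := by
  obtain ⟨q, rfl⟩ := hdvd
  rw [← taylor_coeff, taylor_mul]
  have h1 : taylor li ((X - C li) ^ ni) = X ^ ni := by
    simp [taylor_apply, pow_comp, sub_comp]
  rw [h1, mul_comm, coeff_mul_X_pow']
  simp [Nat.not_le_of_lt hk]

end Aux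

/-- Suppose `(X − λᵢ)^{nᵢ}` divides the characteristic polynomial of `A` and `j < nᵢ`.
Let `B⁽ʲ⁾(λᵢ)` be the entrywise `j`-th Hasse derivative of `adj(X·I − A)` evaluated
at `λᵢ`.  Then `(A − λᵢ·I)^{j+1} · B⁽ʲ⁾(λᵢ) = 0`, so the columns of `B⁽ʲ⁾(λᵢ)` lie in
the characteristic space `ker (A − λᵢ·I)^{nᵢ}`. -/
theorem pow_mul_hasseDeriv_adjugate_eq_zero
    (F : Type*) [Field F] (n : ℕ) (A : Matrix (Fin n) (Fin n) F) (li : F) (ni : ℕ)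
    (hdvd : (Polynomial.X - Polynomial.C li) ^ ni ∣ Matrix.charpoly A)
    (j : ℕ) (hj : j < ni) :
    (A - li • (1 : Matrix (Fin n) (Fin n) F)) ^ (j + 1) *
        ((Matrix.adjugate (Matrix.charmatrix A)).map
          fun p => (Polynomial.hasseDeriv j p).eval li) = 0 := by
  set B : ℕ → Matrix (Fin n) (Fin n) F := fun k =>
    (adjugate (charmatrix A)).map fun p => (hasseDeriv k p).eval li with hB
  -- key entrywise identity from `mul_adjugate`
  have hmul : ∀ k, ∀ i l, ∑ m, (hasseDeriv k (charmatrix A i m * adjugate (charmatrix A) m l)).eval li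
      = (hasseDeriv k (charpoly A)).eval li * (if i = l then 1 else 0) := by
    intro k i l
    have h2 : ∑ m, charmatrix A i m * adjugate (charmatrix A) m l
        = charpoly A * (if i = l then 1 else 0) := by
      have h := congrArg (fun M => M i l) (mul_adjugate (charmatrix A))
      simpa [Matrix.mul_apply, Matrix.smul_apply, Matrix.one_apply, smul_eq_mul,
        Matrix.charpoly, mul_ite] using h
    rw [← eval_finset_sum, ← map_sum, h2]
    split_ifs <;> simp
  -- step identity
  have hstep : ∀ k, k + 1 < ni → (A - li • 1) * B (k + 1) = B k := by
    intro k hk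
    ext i l
    have h := hmul (k + 1) i l
    have hterm : ∀ m, (hasseDeriv (k + 1) (charmatrix A i m * adjugate (charmatrix A) m l)).eval li
        = (if i = m then ((hasseDeriv k (adjugate (charmatrix A) m l)).eval li
            + li * (hasseDeriv (k + 1) (adjugate (charmatrix A) m l)).eval li) else 0)
          - A i m * (hasseDeriv (k + 1) (adjugate (charmatrix A) m l)).eval li := by
      intro m
      rw [charmatrix_apply, Matrix.diagonal_apply, sub_mul, map_sub, eval_sub,
        hasseDeriv_eval_C_mul]
      congr 1
      split_ifs with hi
      · rw [hasseDeriv_eval_X_mul]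
      · simp
    simp only [hterm, Finset.sum_sub_distrib, Finset.sum_ite_eq, Finset.mem_univ, if_true] at h
    rw [hasseDeriv_eval_of_pow_dvd li _ ni (k + 1) hdvd hk, zero_mul] at h
    simp only [hB, Matrix.mul_apply, Matrix.sub_apply, Matrix.map_apply, Matrix.smul_apply,
      Matrix.one_apply, smul_eq_mul, sub_mul, Finset.sum_sub_distrib, mul_ite, mul_one, mul_zero,
      ite_mul, zero_mul, Finset.sum_ite_eq, Finset.mem_univ, if_true]
    linear_combination -h
  -- base case
  have hbase : (A - li • 1) * B 0 = 0 := by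
    ext i l
    have h := hmul 0 i l
    have hterm : ∀ m, (hasseDeriv 0 (charmatrix A i m * adjugate (charmatrix A) m l)).eval li
        = ((if i = m then li else 0) - A i m) * (hasseDeriv 0 (adjugate (charmatrix A) m l)).eval li := by
      intro m
      simp only [hasseDeriv_zero, LinearMap.id_coe, id_eq, eval_mul, charmatrix_apply,
        Matrix.diagonal_apply, eval_sub, eval_C]
      split_ifs with hi <;> simp
    simp only [hterm] at h
    have h0 : (hasseDeriv 0 (charpoly A)).eval li = 0 :=
      hasseDeriv_eval_of_pow_dvd li _ ni 0 hdvd (Nat.lt_of_le_of_lt (Nat.zero_le j) hj)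
    rw [h0, zero_mul] at h
    simp only [hB, Matrix.mul_apply, Matrix.sub_apply, Matrix.map_apply, Matrix.smul_apply,
      Matrix.one_apply, smul_eq_mul, Matrix.zero_apply]
    have hneg : ∀ x, (A i x - li * (if i = x then 1 else 0)) *
          (hasseDeriv 0 (adjugate (charmatrix A) x l)).eval li
        = -(((if i = x then li else 0) - A i x) *
            (hasseDeriv 0 (adjugate (charmatrix A) x l)).eval li) := by
      intro x; split_ifs <;> ring
    calc ∑ x, (A i x - li * (if i = x then 1 else 0)) *
          (hasseDeriv 0 (adjugate (charmatrix A) x l)).eval li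
        = -∑ x, ((if i = x then li else 0) - A i x) *
            (hasseDeriv 0 (adjugate (charmatrix A) x l)).eval li := by
          rw [← Finset.sum_neg_distrib]
          exact Finset.sum_congr rfl fun x _ => hneg x
      _ = 0 := by rw [h, neg_zero]
  -- induction
  clear hmul
  induction j with
  | zero => rw [pow_one]; exact hbase
  | succ k ih =>
    have : (A - li • 1) ^ (k + 1 + 1) = (A - li • 1) ^ (k + 1) * (A - li • 1) := pow_succ _ _
    rw [this, mul_assoc, hstep k hj, ih (Nat.lt_of_succ_lt hj)]
end

section
/- Let F be a field, A an n×n matrix over F, Q ∈ F[X], and q ≥ 1 such that Q^q divides the characteristic polynomial P of A. Then there exists an n×n polynomial matrix M(X) such that (Q(X)·I − Q(A)) · adj(X·I − A) = Q(X)^q · M(X), where Q(A) is the evaluation of Q at A embedded as a constant polynomial matrix. -/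
open Polynomial Matrix

lemma commute_sub_aeval_aux {R S : Type*} [CommSemiring R] [Ring S] [Algebra R S]
    (a b : S) (h : Commute a b) (p : R[X]) :
    ∃ r : S, Commute (a - b) r ∧
      Polynomial.aeval a p - Polynomial.aeval b p = (a - b) * r := by
  induction p using Polynomial.induction_on' with
  | add p₁ p₂ hp₁ hp₂ =>
    obtain ⟨r, hr, he⟩ := hp₁
    obtain ⟨s, hs, hes⟩ := hp₂
    refine ⟨r + s, hr.add_right hs, ?_⟩
    rw [map_add, map_add, mul_add, ← he, ← hes]
    abel
  | monomial m c =>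
    have hab : Commute (a - b) (∑ i ∈ Finset.range m, a ^ i * b ^ (m - 1 - i)) := by
      refine Commute.sum_right _ _ _ fun i _ => ?_
      have ha : Commute (a - b) a := ((Commute.refl a).sub_left h.symm)
      have hb : Commute (a - b) b := (h.sub_left (Commute.refl b))
      exact (ha.pow_right i).mul_right (hb.pow_right _)
    refine ⟨algebraMap R S c * ∑ i ∈ Finset.range m, a ^ i * b ^ (m - 1 - i),
      ((Algebra.commute_algebraMap_left c (a - b)).symm).mul_right hab, ?_⟩
    rw [aeval_monomial, aeval_monomial, ← mul_sub, ← h.mul_geom_sum₂ m, ← mul_assoc,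
      ← mul_assoc, (Algebra.commute_algebraMap_left c (a - b)).eq]

/-- If `Q^q` divides the characteristic polynomial of `A` (`q ≥ 1`), then there is a
polynomial matrix `M(X)` with `(Q(X)·I − Q(A)) · adj(X·I − A) = Q(X)^q · M(X)`. -/
theorem polyEval_sub_mul_adjugate_charmatrix
    (F : Type*) [Field F] (n : ℕ) (A : Matrix (Fin n) (Fin n) F)
    (Q : Polynomial F) (q : ℕ) (hq : 1 ≤ q)
    (hdvd : Q ^ q ∣ Matrix.charpoly A) :
    ∃ M : Matrix (Fin n) (Fin n) (Polynomial F),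
      (Q • (1 : Matrix (Fin n) (Fin n) (Polynomial F)) -
          (Polynomial.aeval A Q).map Polynomial.C) *
        Matrix.adjugate (Matrix.charmatrix A) = Q ^ q • M := by
  set a : Matrix (Fin n) (Fin n) (Polynomial F) := Matrix.scalar (Fin n) (X : (Polynomial F))
  set b : Matrix (Fin n) (Fin n) (Polynomial F) := A.map Polynomial.C
  have hab : Commute a b :=
    Matrix.scalar_commute _ (fun r' => Polynomial.commute_X r') _
  obtain ⟨r, hr, he⟩ := commute_sub_aeval_aux a b hab Q
  obtain ⟨S, hS⟩ := hdvd
  refine ⟨S • r, ?_⟩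
  have ha : Polynomial.aeval a Q = Q • (1 : Matrix (Fin n) (Fin n) (Polynomial F)) := by
    have : a = algebraMap (Polynomial F) (Matrix (Fin n) (Fin n) (Polynomial F)) X := rfl
    rw [this, Polynomial.aeval_algebraMap_apply, Polynomial.aeval_X_left_apply,
      Algebra.algebraMap_eq_smul_one]
  have hb : Polynomial.aeval b Q = (Polynomial.aeval A Q).map Polynomial.C := by
    have : b = (Polynomial.CAlgHom (R := F)).mapMatrix A := rfl
    rw [this, Polynomial.aeval_algHom_apply]
    rfl
  have hchar : Matrix.charmatrix A = a - b := rfl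
  have hdet : (a - b).det = Matrix.charpoly A := by rw [← hchar]; rfl
  rw [← ha, ← hb, he, hchar, hr.eq, mul_assoc, Matrix.mul_adjugate, hdet, hS, mul_smul]
  ext i j
  simp [Matrix.smul_apply, mul_comm, mul_assoc, mul_left_comm]
end

section
/- Let F be a field, A an n×n matrix over F, Q ∈ F[X] monic of degree d ≥ 1, and q ≥ 1 such that Q^q divides the characteristic polynomial of A. Suppose adj(X·I − A) = Σ_k Cₖ(X)·Q(X)^k where each Cₖ is an n×n polynomial matrix all of whose entries have degree < d (the base-Q expansion of the adjugate). Then Q(A)·C₀ = 0 and Q(A)·Cₖ = C_{k−1} for every 1 ≤ k ≤ q−1, where Q(A) is the evaluation of Q at A acting by matrix multiplication on polynomial matrices. -/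
/-!
Since `X·I` and `A` commute, `Q(X)·I − Q(A)` is a left multiple `D·(X·I − A)` of the
characteristic matrix, so multiplying by the adjugate gives `Q(A)·adj = Q·adj − χ_A·D`.
Inserting the base-`Q` expansion of `adj`, the matrix `Σ_k Q^k (Q(A)·Cₖ − C_{k−1})` is `Q·adj`
plus a multiple of `χ_A`, hence of `Q^q`, up to the top term `Q^N·Q(A)·C_N`. Every coefficient
`Q(A)·Cₖ − C_{k−1}` has entries of degree `< deg Q`, so uniqueness of base-`Q` digits kills the
first `q` of them. The top term is harmless because `q ≤ N`: `χ_A = (X·I − A)·adj` has degree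
`n ≥ q·d` but at most `N·d`.
-/

open Polynomial Matrix Finset

theorem Commute.exists_mul_sub_eq_aeval_sub {R S : Type*} [CommSemiring R] [Ring S]
    [Algebra R S] {x y : S} (h : Commute x y) (p : R[X]) :
    ∃ D : S, D * (x - y) = aeval x p - aeval y p := by
  refine ⟨∑ i ∈ range (p.natDegree + 1),
    p.coeff i • ∑ j ∈ range i, x ^ j * y ^ (i - 1 - j), ?_⟩
  simp only [aeval_eq_sum_range, ← sum_sub_distrib, ← smul_sub, sum_mul, smul_mul_assoc,
    h.geom_sum₂_mul]

namespace Polynomial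

theorem mul_mem_degreeLT_add {R : Type*} [Semiring R] {a b : R[X]} {k m : ℕ}
    (ha : a.natDegree ≤ k) (hb : b ∈ degreeLT R m) : a * b ∈ degreeLT R (k + m) := by
  rw [mem_degreeLT] at hb ⊢
  refine (degree_mul_le a b).trans_lt ?_
  rw [Nat.cast_add]
  exact (add_le_add_left (degree_le_of_natDegree_le ha) _).trans_lt
    (WithBot.add_lt_add_left WithBot.coe_ne_bot hb)

theorem sum_range_pow_mul_mem_degreeLT {R : Type*} [Semiring R] {Q : R[X]}
    {f : ℕ → R[X]} (hf : ∀ k, f k ∈ degreeLT R Q.natDegree) (N : ℕ) :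
    ∑ k ∈ range N, Q ^ k * f k ∈ degreeLT R (N * Q.natDegree) :=
  Submodule.sum_mem _ fun k hk => by
    refine degreeLT_mono ?_ (mul_mem_degreeLT_add natDegree_pow_le (hf k))
    have : k + 1 ≤ N := mem_range.mp hk
    nlinarith

theorem Monic.eq_zero_of_pow_dvd_sum {R : Type*} [CommRing R] [Nontrivial R]
    {Q : R[X]} (hQ : Q.Monic) {f : ℕ → R[X]} (hf : ∀ k, f k ∈ degreeLT R Q.natDegree)
    {q m k : ℕ} (h : Q ^ q ∣ ∑ i ∈ range m, Q ^ i * f i) (hkq : k < q) (hkm : k < m) :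
    f k = 0 := by
  induction q generalizing f m k with
  | zero => omega
  | succ q ih =>
    obtain ⟨m, rfl⟩ : ∃ m', m = m' + 1 := ⟨m - 1, by omega⟩
    have hsplit : ∑ i ∈ range (m + 1), Q ^ i * f i
        = Q * ∑ i ∈ range m, Q ^ i * f (i + 1) + f 0 := by
      simp only [sum_range_succ', mul_sum, pow_succ', mul_assoc, pow_zero, one_mul]
    rw [hsplit] at h
    have hf0 : f 0 = 0 := by
      have hdeg : (f 0).degree < Q.degree := by
        rw [degree_eq_natDegree hQ.ne_zero]
        exact mem_degreeLT.mp (hf 0)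
      rw [← (modByMonic_eq_self_iff hQ).mpr hdeg, modByMonic_eq_zero_iff_dvd hQ,
        ← dvd_add_right (dvd_mul_right Q _)]
      exact (dvd_pow_self Q q.succ_ne_zero).trans h
    obtain ⟨g, hg⟩ := h
    rw [hf0, add_zero, pow_succ', mul_assoc] at hg
    rcases k with _ | k
    · exact hf0
    · exact ih (f := fun i => f (i + 1)) (fun i => hf (i + 1)) ⟨g, hQ.isRegular.left hg⟩
        (by omega) (by omega)

theorem Monic.matrix_eq_zero_of_sum_eq_pow_smul {R ι κ : Type*} [CommRing R]
    [Nontrivial R] {Q : R[X]} (hQ : Q.Monic) {G : ℕ → Matrix ι κ R[X]}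
    (hG : ∀ k i j, G k i j ∈ degreeLT R Q.natDegree) {q m k : ℕ} {E : Matrix ι κ R[X]}
    (h : ∑ i ∈ range m, Q ^ i • G i = Q ^ q • E) (hkq : k < q) (hkm : k < m) : G k = 0 :=
  Matrix.ext fun i j => hQ.eq_zero_of_pow_dvd_sum (fun k => hG k i j) ⟨E i j, by
    simpa [Matrix.sum_apply] using congrFun (congrFun h i) j⟩ hkq hkm

end Polynomial

namespace Matrix

variable {R n : Type*} [CommRing R] [Fintype n]

theorem map_C_mul_apply_mem_degreeLT {l o : Type*} (M : Matrix l n R) {B : Matrix n o R[X]}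
    {d : ℕ} (hB : ∀ i j, B i j ∈ degreeLT R d) (i : l) (j : o) :
    (M.map C * B) i j ∈ degreeLT R d :=
  Submodule.sum_mem _ fun k _ => by
    dsimp only
    rw [map_apply, C_mul']
    exact Submodule.smul_mem _ _ (hB k j)

variable [DecidableEq n]

theorem exists_mul_charmatrix_eq (A : Matrix n n R) (p : R[X]) :
    ∃ D, D * charmatrix A = scalar n p - (aeval A p).map C := by
  have hX : Commute (scalar n (X : R[X])) (C.mapMatrix A) :=
    scalar_commute _ (fun _ => Commute.all _ _) _
  obtain ⟨D, hD⟩ := hX.exists_mul_sub_eq_aeval_sub p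
  refine ⟨D, ?_⟩
  rw [charmatrix, hD, show scalar n (X : R[X]) = algebraMap R[X] (Matrix n n R[X]) X from rfl,
    aeval_algebraMap_apply, aeval_X_left_apply]
  congr 1
  exact aeval_algHom_apply (CAlgHom.mapMatrix : Matrix n n R →ₐ[R] Matrix n n R[X]) A p

theorem exists_aeval_map_C_mul_adjugate_charmatrix (A : Matrix n n R) (p : R[X]) :
    ∃ D, (aeval A p).map C * adjugate (charmatrix A)
      = p • adjugate (charmatrix A) - A.charpoly • D := by
  obtain ⟨D, hD⟩ := exists_mul_charmatrix_eq A p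
  refine ⟨D, ?_⟩
  calc (aeval A p).map C * adjugate (charmatrix A)
      = scalar n p * adjugate (charmatrix A) - D * charmatrix A * adjugate (charmatrix A) := by
        rw [hD, sub_mul, sub_sub_cancel]
    _ = p • adjugate (charmatrix A) - A.charpoly • D := by
        rw [mul_assoc, mul_adjugate, mul_smul_comm, mul_one, scalar_apply,
          ← smul_eq_diagonal_mul]
        rfl

theorem card_le_of_adjugate_charmatrix_mem_degreeLT [Nontrivial R] (A : Matrix n n R) {m : ℕ}
    (h : ∀ i j, adjugate (charmatrix A) i j ∈ degreeLT R m) : Fintype.card n ≤ m := by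
  cases isEmpty_or_nonempty n with
  | inl _ => simp
  | inr hn =>
    obtain ⟨i⟩ := hn
    have hmem : A.charpoly ∈ degreeLT R (1 + m) := by
      have hdiag : A.charpoly = (charmatrix A * adjugate (charmatrix A)) i i := by
        rw [mul_adjugate, smul_apply, one_apply_eq, smul_eq_mul, mul_one]
        rfl
      rw [hdiag, mul_apply]
      refine Submodule.sum_mem _ fun l _ => mul_mem_degreeLT_add ?_ (h l i)
      exact (charmatrix_apply_natDegree_le i l).trans (by split_ifs <;> omega)
    rw [mem_degreeLT, charpoly_degree_eq_dim] at hmem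
    have : Fintype.card n < 1 + m := by exact_mod_cast hmem
    omega

end Matrix

/-- `chainDefect c C k = c * C k - C (k - 1)`, with the convention `C (-1) = 0`. -/
def chainDefect {M : Type*} [Mul M] [Sub M] (c : M) (C : ℕ → M) : ℕ → M
  | 0 => c * C 0
  | k + 1 => c * C (k + 1) - C k

theorem sum_range_succ_pow_smul_chainDefect {S M : Type*} [CommSemiring S] [Ring M]
    [Algebra S M] (Q : S) (c : M) (C : ℕ → M) (N : ℕ) :
    ∑ k ∈ range (N + 1), Q ^ k • chainDefect c C k
      = Q ^ N • (c * C N) + c * ∑ k ∈ range N, Q ^ k • C k - Q • ∑ k ∈ range N, Q ^ k • C k := by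
  have h := sum_range_succ' (fun k => Q ^ k • (c * C k)) N
  rw [sum_range_succ] at h
  simp only [sum_range_succ', chainDefect, smul_sub, sum_sub_distrib, mul_sum, smul_sum,
    mul_smul_comm, smul_smul, ← pow_succ']
  rw [sub_add_eq_add_sub, ← h]
  abel

theorem Matrix.chainDefect_map_C_apply_mem_degreeLT {R n : Type*} [CommRing R] [Fintype n]
    (M : Matrix n n R) {C : ℕ → Matrix n n R[X]} {d : ℕ} (hC : ∀ k i j, C k i j ∈ degreeLT R d)
    (k : ℕ) (i j : n) : chainDefect (M.map Polynomial.C) C k i j ∈ degreeLT R d := by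
  cases k with
  | zero => exact map_C_mul_apply_mem_degreeLT M (hC 0) i j
  | succ k => exact Submodule.sub_mem _ (map_C_mul_apply_mem_degreeLT M (hC (k + 1)) i j) (hC k i j)

/-- Let `Q` be monic of degree `d ≥ 1` with `Q^q` dividing the characteristic
polynomial of `A` (`q ≥ 1`), and let `adj(X·I − A) = Σ_k Cₖ(X)·Q(X)^k` be the base-`Q`
expansion of the adjugate (all entries of each `Cₖ` of degree `< d`).  Then
`Q(A)·C₀ = 0` and `Q(A)·Cₖ = C_{k−1}` for `1 ≤ k ≤ q − 1`. -/
theorem baseQ_expansion_adjugate_chain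
    (F : Type*) [Field F] (n : ℕ) (A : Matrix (Fin n) (Fin n) F)
    (Q : Polynomial F) (d q : ℕ) (hQ : Q.Monic) (hd : Q.natDegree = d) (hd1 : 1 ≤ d)
    (hq : 1 ≤ q) (hdvd : Q ^ q ∣ Matrix.charpoly A)
    (C : ℕ → Matrix (Fin n) (Fin n) (Polynomial F))
    (hdeg : ∀ (k : ℕ) (i j : Fin n), (C k i j).degree < (d : ℕ))
    (N : ℕ)
    (hexp : Matrix.adjugate (Matrix.charmatrix A) = ∑ k ∈ Finset.range N, Q ^ k • C k) :
    ((Polynomial.aeval A Q).map Polynomial.C) * C 0 = 0 ∧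
    ∀ k : ℕ, 1 ≤ k → k ≤ q - 1 →
      ((Polynomial.aeval A Q).map Polynomial.C) * C k = C (k - 1) := by
  subst hd
  simp only [← mem_degreeLT] at hdeg
  obtain ⟨R, hR⟩ := hdvd
  obtain ⟨D, hD⟩ := exists_aeval_map_C_mul_adjugate_charmatrix A Q
  set c := (aeval A Q).map Polynomial.C
  have hqN : q ≤ N := by
    have hqd : q * Q.natDegree ≤ n := by
      simpa [hQ.natDegree_pow] using natDegree_le_of_dvd ⟨R, hR⟩ (charpoly_monic A).ne_zero
    have hnN : n ≤ N * Q.natDegree := by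
      simpa using card_le_of_adjugate_charmatrix_mem_degreeLT A fun i j => by
        simp only [hexp, Matrix.sum_apply, Matrix.smul_apply, smul_eq_mul]
        exact sum_range_pow_mul_mem_degreeLT (fun k => hdeg k i j) N
    exact Nat.le_of_mul_le_mul_right (hqd.trans hnN) hd1
  have hsum : ∑ k ∈ range (N + 1), Q ^ k • chainDefect c C k
      = Q ^ q • (Q ^ (N - q) • (c * C N) - R • D) := by
    rw [sum_range_succ_pow_smul_chainDefect, ← hexp, hD, hR, smul_sub, smul_smul, ← pow_add,
      Nat.add_sub_cancel' hqN, mul_smul]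
    abel
  have hdefect : ∀ k < q, chainDefect c C k = 0 := fun k hk =>
    hQ.matrix_eq_zero_of_sum_eq_pow_smul (chainDefect_map_C_apply_mem_degreeLT _ hdeg) hsum hk
      (by omega)
  refine ⟨hdefect 0 (by omega), fun k hk1 hkq => ?_⟩
  obtain ⟨k, rfl⟩ := Nat.exists_eq_add_of_le' hk1
  exact sub_eq_zero.mp (hdefect (k + 1) (by omega))
end

section
/- Let F be a field, A an n×n matrix over F, Q ∈ F[X] an irreducible polynomial of degree d, k ≥ 1, and v a vector with Q(A)^k v = 0 and Q(A)^{k−1} v ≠ 0. Then the k·d vectors Aⁱ Q(A)ʲ v, for 0 ≤ i ≤ d−1 and 0 ≤ j ≤ k−1, are linearly independent over F. -/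
open Polynomial Matrix

/-- Uniqueness of Q-adic expansion. -/
lemma qadic_zero {F : Type*} [Field F] (Q : Polynomial F) (hQ0 : Q ≠ 0) :
    ∀ (k : ℕ) (f : ℕ → Polynomial F), (∀ j, (f j).degree < Q.degree) →
      (∑ j ∈ Finset.range k, f j * Q ^ j) = 0 → ∀ j < k, f j = 0 := by
  intro k
  induction k with
  | zero => intro f _ _ j hj; omega
  | succ k ih =>
    intro f hf hsum j hj
    rw [Finset.sum_range_succ'] at hsum
    simp only [pow_zero, mul_one] at hsum
    have hshift : (∑ i ∈ Finset.range k, f (i + 1) * Q ^ (i + 1)) =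
        Q * ∑ i ∈ Finset.range k, f (i + 1) * Q ^ i := by
      rw [Finset.mul_sum]; congr 1; ext i; ring
    have hdvd : Q ∣ f 0 := by
      have h0 : f 0 = -(Q * ∑ i ∈ Finset.range k, f (i + 1) * Q ^ i) := by
        rw [hshift] at hsum; linear_combination hsum
      rw [h0]; exact dvd_neg.mpr ⟨_, rfl⟩
    have hf0 : f 0 = 0 := by
      by_contra h
      exact absurd (Polynomial.degree_le_of_dvd hdvd h) (not_le.mpr (hf 0))
    rcases Nat.eq_zero_or_pos j with rfl | hjpos
    · exact hf0
    · have hsum' : (∑ i ∈ Finset.range k, f (i + 1) * Q ^ i) = 0 := by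
        have h1 : (∑ i ∈ Finset.range k, f (i + 1) * Q ^ (i + 1)) = 0 := by
          rw [hf0] at hsum; simpa using hsum
        rw [hshift] at h1
        exact (mul_eq_zero.mp h1).resolve_left hQ0
      have := ih (fun i => f (i + 1)) (fun i => hf (i + 1)) hsum' (j - 1) (by omega)
      simpa [Nat.sub_add_cancel hjpos] using this

/-- If `Q` is irreducible of degree `d`, `k ≥ 1`, and `v` satisfies `Q(A)^k v = 0` and
`Q(A)^{k−1} v ≠ 0`, then the `k·d` vectors `Aⁱ Q(A)ʲ v` (`0 ≤ i ≤ d−1`, `0 ≤ j ≤ k−1`)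
are linearly independent. -/
theorem rational_jordan_cycle_linearIndependent
    (F : Type*) [Field F] (n : ℕ) (A : Matrix (Fin n) (Fin n) F)
    (Q : Polynomial F) (d : ℕ) (hQ : Irreducible Q) (hd : Q.natDegree = d)
    (k : ℕ) (hk : 1 ≤ k) (v : Fin n → F)
    (hv : ((Polynomial.aeval A Q) ^ k).mulVec v = 0)
    (hv' : ((Polynomial.aeval A Q) ^ (k - 1)).mulVec v ≠ 0) :
    LinearIndependent F
      (fun p : Fin d × Fin k =>
        (A ^ (p.1 : ℕ) * (Polynomial.aeval A Q) ^ (p.2 : ℕ)).mulVec v) := by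
  classical
  have hQ0 : Q ≠ 0 := hQ.ne_zero
  have hd1 : 1 ≤ d := hd ▸ hQ.natDegree_pos
  -- the annihilator ideal
  set I : Ideal (Polynomial F) :=
    { carrier := {P | ((aeval A) P).mulVec v = 0}
      add_mem' := fun {a b} ha hb => by
        simp only [Set.mem_setOf_eq, map_add, Matrix.add_mulVec] at *
        rw [ha, hb, add_zero]
      zero_mem' := by simp
      smul_mem' := fun c x hx => by
        show ((aeval A) (c * x)).mulVec v = 0
        rw [_root_.map_mul, ← Matrix.mulVec_mulVec, hx, Matrix.mulVec_zero] } with hI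
  have memI : ∀ P : Polynomial F, P ∈ I ↔ ((aeval A) P).mulVec v = 0 := fun P => Iff.rfl
  have hQk : Q ^ k ∈ I := by rw [memI, map_pow]; exact hv
  have hQk1 : Q ^ (k - 1) ∉ I := by rw [memI, map_pow]; exact hv'
  have hdvdI : ∀ P ∈ I, Q ^ k ∣ P := by
    have hprin : I.IsPrincipal := inferInstance
    obtain ⟨g, hg⟩ := hprin
    rw [Ideal.submodule_span_eq] at hg
    have hgdvd : g ∣ Q ^ k := by
      rw [← Ideal.mem_span_singleton, ← hg]; exact hQk
    obtain ⟨m, hm, hass⟩ := (dvd_prime_pow hQ.prime k).mp hgdvd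
    have hmk : m = k := by
      by_contra h
      have hmk1 : m ≤ k - 1 := by omega
      apply hQk1
      have hgI : Q ^ m ∈ I := by
        rw [hg, Ideal.mem_span_singleton]
        exact hass.dvd
      have hsplit : Q ^ (k - 1) = Q ^ m * Q ^ (k - 1 - m) := by
        rw [← pow_add]; congr 1; omega
      rw [hsplit]; exact Ideal.mul_mem_right _ _ hgI
    intro P hP
    rw [hg, Ideal.mem_span_singleton] at hP
    subst hmk
    exact hass.symm.dvd.trans hP
  rw [Fintype.linearIndependent_iff]
  intro c hc
  set c' : ℕ → ℕ → F := fun i j =>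
    if h : i < d ∧ j < k then c (⟨i, h.1⟩, ⟨j, h.2⟩) else 0 with hc'
  set R : ℕ → Polynomial F := fun j => ∑ i ∈ Finset.range d, C (c' i j) * X ^ i with hR
  set P : Polynomial F := ∑ j ∈ Finset.range k, R j * Q ^ j with hPdef
  have hRdeg : ∀ j, (R j).degree < Q.degree := by
    intro j
    have hQdeg : (d : WithBot ℕ) = Q.degree := by
      rw [Polynomial.degree_eq_natDegree hQ0, hd]
    apply lt_of_le_of_lt (Polynomial.degree_sum_le _ _)
    rw [Finset.sup_lt_iff (by rw [← hQdeg]; exact_mod_cast WithBot.bot_lt_coe _)]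
    intro i hi
    apply lt_of_le_of_lt (Polynomial.degree_C_mul_X_pow_le i (c' i j))
    rw [← hQdeg]
    exact_mod_cast Finset.mem_range.mp hi
  have sum_mulVec : ∀ {ι : Type} (s : Finset ι) (f : ι → Matrix (Fin n) (Fin n) F),
      (∑ i ∈ s, f i) *ᵥ v = ∑ i ∈ s, f i *ᵥ v := fun s f =>
    map_sum (Matrix.mulVec.addMonoidHomLeft v) f s
  have hPI : P ∈ I := by
    rw [memI, hPdef, map_sum, sum_mulVec]
    have hterm : ∀ j ∈ Finset.range k, ((aeval A) (R j * Q ^ j)) *ᵥ v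
        = ∑ i ∈ Finset.range d, c' i j • ((A ^ i * (aeval A Q) ^ j) *ᵥ v) := by
      intro j _
      rw [_root_.map_mul, hR]
      simp only [map_sum, _root_.map_mul, map_pow, aeval_C, aeval_X]
      rw [Finset.sum_mul, sum_mulVec]
      refine Finset.sum_congr rfl fun i _ => ?_
      rw [Algebra.algebraMap_eq_smul_one, smul_mul_assoc, smul_mul_assoc, one_mul,
        Matrix.smul_mulVec]
    rw [Finset.sum_congr rfl hterm, ← hc, Fintype.sum_prod_type_right]
    rw [← Fin.sum_univ_eq_sum_range (fun j =>
      ∑ i ∈ Finset.range d, c' i j • ((A ^ i * (aeval A Q) ^ j) *ᵥ v)) k]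
    refine Finset.sum_congr rfl fun j _ => ?_
    rw [← Fin.sum_univ_eq_sum_range (fun i =>
      c' i (j : ℕ) • ((A ^ i * (aeval A Q) ^ (j : ℕ)) *ᵥ v)) d]
    refine Finset.sum_congr rfl fun i _ => ?_
    have hcc : c' (i : ℕ) (j : ℕ) = c (i, j) := by
      simp [hc']
    rw [hcc]
  have hPdeg : P.degree < ((k * d : ℕ) : WithBot ℕ) := by
    apply lt_of_le_of_lt (Polynomial.degree_sum_le _ _)
    rw [Finset.sup_lt_iff (by exact_mod_cast WithBot.bot_lt_coe _)]
    intro j hj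
    rcases eq_or_ne (R j) 0 with h0 | h0
    · rw [h0, zero_mul, Polynomial.degree_zero]
      exact_mod_cast WithBot.bot_lt_coe _
    · have hjk : j < k := Finset.mem_range.mp hj
      set e := (R j).natDegree with he
      have hed : e < d := by
        have := hRdeg j
        rw [Polynomial.degree_eq_natDegree h0, Polynomial.degree_eq_natDegree hQ0, hd] at this
        exact_mod_cast this
      rw [Polynomial.degree_mul, Polynomial.degree_pow,
        Polynomial.degree_eq_natDegree h0, Polynomial.degree_eq_natDegree hQ0, hd,
        nsmul_eq_mul]
      have hnat : e + j * d < k * d := by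
        have h5 : e + j * d < (j + 1) * d := by
          rw [add_one_mul]
          rw [add_comm]
          exact Nat.add_lt_add_left hed _
        have h6 : (j + 1) * d ≤ k * d := Nat.mul_le_mul_right d hjk
        exact lt_of_lt_of_le h5 h6
      exact_mod_cast hnat
  have hP0 : P = 0 := by
    by_contra h
    have hle := Polynomial.degree_le_of_dvd (hdvdI P hPI) h
    rw [Polynomial.degree_pow, Polynomial.degree_eq_natDegree hQ0, hd] at hle
    have hle' : ((k * d : ℕ) : WithBot ℕ) ≤ P.degree := by
      rw [nsmul_eq_mul] at hle; exact_mod_cast hle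
    exact absurd (lt_of_le_of_lt hle' hPdeg) (lt_irrefl _)
  intro p
  have hRj0 : R (p.2 : ℕ) = 0 :=
    qadic_zero Q hQ0 k R hRdeg hP0 (p.2 : ℕ) p.2.isLt
  have hcoeff : (R (p.2 : ℕ)).coeff (p.1 : ℕ) = c p := by
    rw [hR]
    simp only [Polynomial.finset_sum_coeff, Polynomial.coeff_C_mul,
      Polynomial.coeff_X_pow]
    rw [Finset.sum_eq_single (p.1 : ℕ)]
    · rw [if_pos rfl, mul_one]
      simp [hc']
    · intro b _ hb
      rw [if_neg (Ne.symm hb), mul_zero]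
    · intro hmem
      exact absurd (Finset.mem_range.mpr p.1.isLt) hmem
  rw [← hcoeff, hRj0, Polynomial.coeff_zero]
end

section
/- Let F be a field, A an n×n matrix over F, Q ∈ F[X] an irreducible polynomial of degree d, and k ≥ k′ ≥ 1. Let v satisfy Q(A)^k v = 0 and Q(A)^{k−1} v ≠ 0, and let w satisfy Q(A)^{k′} w = 0, with Q(A)^{k′−1} w not lying in the span of {Aⁱ Q(A)^{k−1} v : 0 ≤ i ≤ d−1} (in particular Q(A)^{k′−1} w ≠ 0). Then the (k + k′)·d vectors Aⁱ Q(A)ʲ v (0 ≤ i ≤ d−1, 0 ≤ j ≤ k−1) together with Aⁱ Q(A)ʲ w (0 ≤ i ≤ d−1, 0 ≤ j ≤ k′−1) are linearly independent over F. -/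
/-!
Write `Aⁱ Q(A)ʲ u` as `(Xⁱ Qʲ)(A) u`. For `i < deg Q` the polynomials `Xⁱ Qʲ` have the distinct
degrees `i + j deg Q`, so those with `j < k` are independent and span only polynomials of degree
`< k deg Q`; as the annihilator of `v` is `(Qᵏ)`, they stay independent after evaluation at `v`.
The two cycles span `F[A] v` and `F[A] w`, which meet trivially: if `R(A) w ∈ F[A] v` but
`Q^k' ∤ R`, write `R = Qᵇ T` with `T` prime to `Q`; inverting `T` modulo `Q` puts `Q(A)^(k'-1) w`
into `F[A] v ∩ ker Q(A) = Q(A)^(k-1) F[A] v`, the span of the `Aⁱ Q(A)^(k-1) v`.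
-/

open Polynomial Matrix

theorem Irreducible.exists_eq_pow_mul_of_not_pow_dvd {R : Type*} [CommRing R] [IsDomain R]
    [IsPrincipalIdealRing R] {p a : R} (hp : Irreducible p) {k : ℕ} (h : ¬p ^ k ∣ a) :
    ∃ b c, b < k ∧ IsCoprime c p ∧ a = p ^ b * c := by
  obtain ⟨b, c, hpc, rfl⟩ := WfDvdMonoid.max_power_factor (a₀ := a)
    (by rintro rfl; exact h (dvd_zero _)) hp
  refine ⟨b, c, ?_, (hp.coprime_iff_not_dvd.mpr hpc).symm, rfl⟩
  by_contra! hkb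
  exact h (dvd_mul_of_dvd_left (pow_dvd_pow p hkb) c)

namespace Polynomial

section QAdic

variable {R : Type*} [CommRing R] [IsDomain R] {Q : R[X]}

noncomputable def qAdicSequence (hQ : Q ≠ 0) : Sequence R where
  elems' n := X ^ (n % Q.natDegree) * Q ^ (n / Q.natDegree)
  degree_eq' n := by
    rw [degree_mul, degree_X_pow, degree_pow, degree_eq_natDegree hQ, nsmul_eq_mul]
    norm_cast
    rw [mul_comm, Nat.mod_add_div]

theorem qAdicSequence_add_mul (hQ : Q ≠ 0) {i : ℕ} (hi : i < Q.natDegree) (j : ℕ) :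
    qAdicSequence hQ (i + Q.natDegree * j) = X ^ i * Q ^ j := by
  have hd : 0 < Q.natDegree := by omega
  change X ^ _ * Q ^ _ = _
  rw [Nat.add_mul_mod_self_left, Nat.mod_eq_of_lt hi, Nat.add_mul_div_left _ _ hd,
    Nat.div_eq_of_lt hi, zero_add]

theorem linearIndependent_X_pow_mul_pow (hQ : Q ≠ 0) (m : ℕ) :
    LinearIndependent R
      fun p : Fin Q.natDegree × Fin m => (X ^ (p.1 : ℕ) * Q ^ (p.2 : ℕ) : R[X]) := by
  have hinj : Function.Injective fun p : Fin Q.natDegree × Fin m =>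
      (p.1 : ℕ) + Q.natDegree * p.2 :=
    Fin.val_injective.comp (finProdFinEquiv.injective.comp Prod.swap_injective)
  have hcomp : (fun p : Fin Q.natDegree × Fin m => (X ^ (p.1 : ℕ) * Q ^ (p.2 : ℕ) : R[X])) =
      qAdicSequence hQ ∘ fun p : Fin Q.natDegree × Fin m => (p.1 : ℕ) + Q.natDegree * p.2 :=
    _root_.funext fun p : Fin Q.natDegree × Fin m => (qAdicSequence_add_mul hQ p.1.isLt p.2).symm
  rw [hcomp]
  exact (qAdicSequence hQ).linearIndependent.comp _ hinj

theorem eq_zero_of_mem_span_X_pow_mul_pow_of_pow_dvd (hQ : Q ≠ 0) {m : ℕ} {P : R[X]}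
    (hP : P ∈ Submodule.span R
      (Set.range fun p : Fin Q.natDegree × Fin m => (X ^ (p.1 : ℕ) * Q ^ (p.2 : ℕ) : R[X])))
    (hdvd : Q ^ m ∣ P) : P = 0 := by
  refine eq_zero_of_dvd_of_degree_lt hdvd ?_
  have hspan : Submodule.span R
      (Set.range fun p : Fin Q.natDegree × Fin m => (X ^ (p.1 : ℕ) * Q ^ (p.2 : ℕ) : R[X])) ≤
      degreeLT R (m * Q.natDegree) := by
    rw [Submodule.span_le]
    rintro _ ⟨⟨i, j⟩, rfl⟩
    dsimp only
    rw [SetLike.mem_coe, mem_degreeLT, ← qAdicSequence_add_mul hQ i.isLt, Sequence.degree_eq]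
    exact_mod_cast (finProdFinEquiv (j, i)).isLt
  rw [degree_pow, degree_eq_natDegree hQ, nsmul_eq_mul, ← Nat.cast_mul]
  exact mem_degreeLT.mp (hspan hP)

end QAdic

section Module

variable {R M : Type*} [CommRing R] [AddCommGroup M] [Module R M] (f : Module.End R M)

theorem aeval_apply_eq_zero_of_dvd {P S : R[X]} {u : M} (hPS : P ∣ S) (hu : aeval f P u = 0) :
    aeval f S u = 0 := by
  obtain ⟨c, rfl⟩ := hPS
  rw [mul_comm, map_mul, Module.End.mul_apply, hu, map_zero]

theorem aeval_apply_aeval_apply_eq_self {a b T P : R[X]} (h : a * T + b * P = 1) {u : M}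
    (hu : aeval f P u = 0) : aeval f a (aeval f T u) = u := by
  simpa [hu] using congr(aeval f $h u)

noncomputable def aevalApplyₗ (u : M) : R[X] →ₗ[R] M :=
  (LinearMap.applyₗ u).comp (aeval f).toLinearMap

theorem exists_aeval_apply_eq_of_mem_span {ι : Type*} {g : ι → R[X]} {u x : M}
    (hx : x ∈ Submodule.span R (Set.range fun i => aeval f (g i) u)) :
    ∃ S : R[X], aeval f S u = x :=
  Submodule.span_le (p := LinearMap.range (aevalApplyₗ f u)).mpr
    (Set.range_subset_iff.mpr fun i => ⟨g i, rfl⟩) hx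

theorem aeval_apply_aeval_pow_sub_one_apply (P : R[X]) {k : ℕ} (hk : k ≠ 0) (u : M) :
    aeval f P (aeval f (P ^ (k - 1)) u) = aeval f (P ^ k) u := by
  rw [← Module.End.mul_apply, ← map_mul, ← pow_succ',
    Nat.sub_add_cancel (Nat.one_le_iff_ne_zero.mpr hk)]

theorem aeval_apply_aeval_pow_apply_of_le (P T : R[X]) {b m : ℕ} (hbm : b ≤ m) (u : M) :
    aeval f T (aeval f (P ^ m) u) = aeval f (P ^ (m - b)) (aeval f (P ^ b * T) u) := by
  simp only [← Module.End.mul_apply, ← map_mul]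
  rw [← pow_sub_mul_pow P hbm]
  congr 2
  ring

end Module

section Field

variable {F M : Type*} [Field F] [AddCommGroup M] [Module F M] (f : Module.End F M)
  {Q : F[X]} {k : ℕ} {v : M}

theorem pow_dvd_of_aeval_apply_eq_zero (hQ : Irreducible Q) (hv : aeval f (Q ^ k) v = 0)
    (hv' : aeval f (Q ^ (k - 1)) v ≠ 0) {S : F[X]} (hS : aeval f S v = 0) : Q ^ k ∣ S := by
  by_contra h
  obtain ⟨b, T, hbk, hTQ, rfl⟩ := hQ.exists_eq_pow_mul_of_not_pow_dvd h
  have hQu : aeval f Q (aeval f (Q ^ (k - 1)) v) = 0 := by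
    rw [aeval_apply_aeval_pow_sub_one_apply f Q (by omega), hv]
  have hTu : aeval f T (aeval f (Q ^ (k - 1)) v) = 0 := by
    rw [aeval_apply_aeval_pow_apply_of_le f Q T (b := b) (by omega), hS, map_zero]
  exact hv' (Submodule.disjoint_def.mp (disjoint_ker_aeval_of_isCoprime f hTQ) _ hTu hQu)

theorem aeval_mul_apply_mem_span {r P : F[X]} {d : ℕ} (hr : r.natDegree < d) (u : M) :
    aeval f (r * P) u ∈ Submodule.span F
      (Set.range fun i : Fin d => aeval f (X ^ (i : ℕ) * P) u) := by
  rw [r.as_sum_range' d hr, Finset.sum_mul, map_sum, LinearMap.sum_apply]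
  refine Submodule.sum_mem _ fun i hi => ?_
  rw [← smul_X_eq_monomial, smul_mul_assoc, map_smul, LinearMap.smul_apply]
  exact Submodule.smul_mem _ _ (Submodule.subset_span ⟨⟨i, Finset.mem_range.mp hi⟩, rfl⟩)

theorem aeval_apply_mem_span_of_aeval_apply_eq_zero (hQ : Irreducible Q)
    (hv : aeval f (Q ^ k) v = 0) (hv' : aeval f (Q ^ (k - 1)) v ≠ 0) {S : F[X]}
    (hQS : aeval f Q (aeval f S v) = 0) :
    aeval f S v ∈ Submodule.span F
      (Set.range fun i : Fin Q.natDegree => aeval f (X ^ (i : ℕ) * Q ^ (k - 1)) v) := by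
  obtain _ | k := k
  · simp only [Nat.zero_sub, pow_zero, map_one, Module.End.one_apply] at hv hv'
    exact absurd hv hv'
  have hdvd : Q ^ k ∣ S := by
    have h := pow_dvd_of_aeval_apply_eq_zero f hQ hv hv' (S := Q * S)
      (by rwa [map_mul, Module.End.mul_apply])
    rw [pow_succ'] at h
    exact (mul_dvd_mul_iff_left hQ.ne_zero).mp h
  obtain ⟨r, rfl⟩ := hdvd
  have hr : Q ^ k * r = r % Q * Q ^ k + r / Q * Q ^ (k + 1) := by
    conv_lhs => rw [← EuclideanDomain.mod_add_div r Q]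
    ring
  rw [hr, map_add, LinearMap.add_apply, aeval_apply_eq_zero_of_dvd f (dvd_mul_left _ _) hv,
    add_zero]
  exact aeval_mul_apply_mem_span f (natDegree_mod_lt r hQ.natDegree_pos.ne') v

theorem pow_dvd_of_aeval_apply_eq_aeval_apply (hQ : Irreducible Q)
    (hv : aeval f (Q ^ k) v = 0) (hv' : aeval f (Q ^ (k - 1)) v ≠ 0) {k' : ℕ} {w : M}
    (hw : aeval f (Q ^ k') w = 0)
    (hw' : aeval f (Q ^ (k' - 1)) w ∉ Submodule.span F
      (Set.range fun i : Fin Q.natDegree => aeval f (X ^ (i : ℕ) * Q ^ (k - 1)) v))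
    {R S : F[X]} (h : aeval f R w = aeval f S v) : Q ^ k' ∣ R := by
  by_contra hR
  obtain ⟨b, T, hbk, ⟨a, c, hac⟩, rfl⟩ := hQ.exists_eq_pow_mul_of_not_pow_dvd hR
  apply hw'
  have hQu : aeval f Q (aeval f (Q ^ (k' - 1)) w) = 0 := by
    rw [aeval_apply_aeval_pow_sub_one_apply f Q (by omega), hw]
  have hTu : aeval f T (aeval f (Q ^ (k' - 1)) w) = aeval f (Q ^ (k' - 1 - b) * S) v := by
    rw [aeval_apply_aeval_pow_apply_of_le f Q T (b := b) (by omega), h, map_mul,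
      Module.End.mul_apply]
  have hu := aeval_apply_aeval_apply_eq_self f hac hQu
  rw [← hu, hTu, ← Module.End.mul_apply, ← map_mul]
  refine aeval_apply_mem_span_of_aeval_apply_eq_zero f hQ hv hv' ?_
  rw [map_mul, Module.End.mul_apply, ← hTu, hu, hQu]

theorem linearIndependent_aeval_X_pow_mul_pow_apply (hQ : Irreducible Q)
    (hv : aeval f (Q ^ k) v = 0) (hv' : aeval f (Q ^ (k - 1)) v ≠ 0) :
    LinearIndependent F fun p : Fin Q.natDegree × Fin k =>
      aeval f (X ^ (p.1 : ℕ) * Q ^ (p.2 : ℕ)) v :=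
  (linearIndependent_X_pow_mul_pow hQ.ne_zero k).map (f := aevalApplyₗ f v) <|
    Submodule.disjoint_def.mpr fun _ hP hker =>
      eq_zero_of_mem_span_X_pow_mul_pow_of_pow_dvd hQ.ne_zero hP
        (pow_dvd_of_aeval_apply_eq_zero f hQ hv hv' hker)

theorem linearIndependent_sum_elim_aeval_X_pow_mul_pow_apply (hQ : Irreducible Q)
    (hv : aeval f (Q ^ k) v = 0) (hv' : aeval f (Q ^ (k - 1)) v ≠ 0) {k' : ℕ} {w : M}
    (hw : aeval f (Q ^ k') w = 0)
    (hw' : aeval f (Q ^ (k' - 1)) w ∉ Submodule.span F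
      (Set.range fun i : Fin Q.natDegree => aeval f (X ^ (i : ℕ) * Q ^ (k - 1)) v)) :
    LinearIndependent F (Sum.elim
      (fun p : Fin Q.natDegree × Fin k => aeval f (X ^ (p.1 : ℕ) * Q ^ (p.2 : ℕ)) v)
      (fun p : Fin Q.natDegree × Fin k' => aeval f (X ^ (p.1 : ℕ) * Q ^ (p.2 : ℕ)) w)) := by
  have hw'' : aeval f (Q ^ (k' - 1)) w ≠ 0 := fun h0 => hw' (h0 ▸ Submodule.zero_mem _)
  refine (linearIndependent_aeval_X_pow_mul_pow_apply f hQ hv hv').sum_type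
    (linearIndependent_aeval_X_pow_mul_pow_apply f hQ hw hw'')
    (Submodule.disjoint_def.mpr fun x hxv hxw => ?_)
  obtain ⟨S, rfl⟩ := exists_aeval_apply_eq_of_mem_span f hxv
  obtain ⟨R, hR⟩ := exists_aeval_apply_eq_of_mem_span f hxw
  rw [← hR]
  exact aeval_apply_eq_zero_of_dvd f
    (pow_dvd_of_aeval_apply_eq_aeval_apply f hQ hv hv' hw hw' hR) hw

end Field

end Polynomial

theorem two_rational_jordan_cycles_linearIndependent_general
    (F : Type*) [Field F] (n : ℕ) (A : Matrix (Fin n) (Fin n) F)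
    (Q : Polynomial F) (d : ℕ) (hQ : Irreducible Q) (hd : Q.natDegree = d)
    (k k' : ℕ) (v w : Fin n → F)
    (hv : ((Polynomial.aeval A Q) ^ k).mulVec v = 0)
    (hv' : ((Polynomial.aeval A Q) ^ (k - 1)).mulVec v ≠ 0)
    (hw : ((Polynomial.aeval A Q) ^ k').mulVec w = 0)
    (hw' : ((Polynomial.aeval A Q) ^ (k' - 1)).mulVec w ∉
      Submodule.span F (Set.range fun i : Fin d =>
        (A ^ (i : ℕ) * (Polynomial.aeval A Q) ^ (k - 1)).mulVec v)) :
    LinearIndependent F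
      (Sum.elim
        (fun p : Fin d × Fin k =>
          (A ^ (p.1 : ℕ) * (Polynomial.aeval A Q) ^ (p.2 : ℕ)).mulVec v)
        (fun p : Fin d × Fin k' =>
          (A ^ (p.1 : ℕ) * (Polynomial.aeval A Q) ^ (p.2 : ℕ)).mulVec w)) := by
  subst hd
  have hmulVec (P : F[X]) (u : Fin n → F) :
      (aeval A P).mulVec u = aeval (Matrix.toLinAlgEquiv' A) P u := by
    rw [aeval_algHom_apply, Matrix.toLinAlgEquiv'_apply]
  have hpow (i j : ℕ) (u : Fin n → F) :
      (A ^ i * aeval A Q ^ j).mulVec u = aeval (Matrix.toLinAlgEquiv' A) (X ^ i * Q ^ j) u := by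
    rw [← hmulVec, map_mul, map_pow, map_pow, aeval_X]
  simp only [hpow] at hw' ⊢
  simp only [← map_pow, hmulVec] at hv hv' hw hw'
  exact linearIndependent_sum_elim_aeval_X_pow_mul_pow_apply _ hQ hv hv' hw hw'

/-- Let `Q` be irreducible of degree `d` and `k ≥ k′ ≥ 1`.  Suppose `Q(A)^k v = 0`,
`Q(A)^{k−1} v ≠ 0`, `Q(A)^{k′} w = 0`, and `Q(A)^{k′−1} w` does not lie in the span of
`{Aⁱ Q(A)^{k−1} v : 0 ≤ i ≤ d−1}`.  Then the `(k+k′)·d` vectors `Aⁱ Q(A)ʲ v`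
(`0 ≤ i ≤ d−1`, `0 ≤ j ≤ k−1`) together with `Aⁱ Q(A)ʲ w` (`0 ≤ i ≤ d−1`,
`0 ≤ j ≤ k′−1`) are linearly independent. -/
theorem two_rational_jordan_cycles_linearIndependent
    (F : Type*) [Field F] (n : ℕ) (A : Matrix (Fin n) (Fin n) F)
    (Q : Polynomial F) (d : ℕ) (hQ : Irreducible Q) (hd : Q.natDegree = d)
    (k k' : ℕ) (hk' : 1 ≤ k') (hkk' : k' ≤ k) (v w : Fin n → F)
    (hv : ((Polynomial.aeval A Q) ^ k).mulVec v = 0)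
    (hv' : ((Polynomial.aeval A Q) ^ (k - 1)).mulVec v ≠ 0)
    (hw : ((Polynomial.aeval A Q) ^ k').mulVec w = 0)
    (hw' : ((Polynomial.aeval A Q) ^ (k' - 1)).mulVec w ∉
      Submodule.span F (Set.range fun i : Fin d =>
        (A ^ (i : ℕ) * (Polynomial.aeval A Q) ^ (k - 1)).mulVec v)) :
    LinearIndependent F
      (Sum.elim
        (fun p : Fin d × Fin k =>
          (A ^ (p.1 : ℕ) * (Polynomial.aeval A Q) ^ (p.2 : ℕ)).mulVec v)
        (fun p : Fin d × Fin k' =>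
          (A ^ (p.1 : ℕ) * (Polynomial.aeval A Q) ^ (p.2 : ℕ)).mulVec w)) :=
  two_rational_jordan_cycles_linearIndependent_general F n A Q d hQ hd k k' v w hv hv' hw hw'
end

section
/- Let V be a vector space over a field F, f : V → V a linear endomorphism, and (v_{j,l}) a doubly indexed family of vectors in V (indices j, l ≥ 0) with the convention v_{−1,l} = 0, satisfying f(v_{j,l−1}) = v_{j,l} + v_{j−1,l−1} for all j ≥ 0 and l ≥ 1. Then for all j, l ≥ 0: v_{j,l} = f^l(v_{j,0}) − Σ_{m=1}^{min(l,j)} binom(l,m) · v_{j−m,l−m}. -/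
private lemma jordan_chain_aux (F : Type*) [Field F] (V : Type*) [AddCommGroup V] [Module F V]
    (f : Module.End F V) (v : ℤ → ℕ → V)
    (hneg : ∀ l : ℕ, v (-1) l = 0)
    (hrec : ∀ j : ℤ, 0 ≤ j → ∀ l : ℕ, 1 ≤ l →
      f (v j (l - 1)) = v j l + v (j - 1) (l - 1)) :
    ∀ (l : ℕ) (j : ℤ), 0 ≤ j →
      (f ^ l) (v j 0) = ∑ m ∈ Finset.range (min l j.toNat + 1),
        (l.choose m) • v (j - (m : ℤ)) (l - m) := by
  intro l
  induction l with
  | zero => intro j hj; simp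
  | succ l ih =>
    intro j hj
    set n := j.toNat with hn
    have hjn : (n : ℤ) = j := Int.toNat_of_nonneg hj
    have step : ∀ m ∈ Finset.range (min l n + 1),
        (l.choose m) • f (v (j - (m:ℤ)) (l - m)) =
          (l.choose m) • v (j - (m:ℤ)) (l + 1 - m)
            + (l.choose m) • v (j - ((m+1:ℕ):ℤ)) (l + 1 - (m+1)) := by
      intro m hm
      simp only [Finset.mem_range] at hm
      have hml : m ≤ l := by omega
      have hmn : m ≤ n := by omega
      have h0 : (0:ℤ) ≤ j - m := by omega
      have h := hrec (j - m) h0 (l - m + 1) (by omega)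
      rw [Nat.add_sub_cancel] at h
      have e1 : l - m + 1 = l + 1 - m := by omega
      have e2 : l - m = l + 1 - (m+1) := by omega
      have e3 : j - (m:ℤ) - 1 = j - ((m+1:ℕ):ℤ) := by push_cast; ring
      rw [e1, e3] at h
      rw [e2] at h ⊢
      rw [h, smul_add]
    rw [pow_succ', Module.End.mul_apply, ih j hj, map_sum]
    simp only [map_nsmul]
    rw [Finset.sum_congr rfl step, Finset.sum_add_distrib]
    set G := fun m : ℕ => v (j - (m:ℤ)) (l + 1 - m) with hG
    rcases le_or_gt n l with hnl | hln
    · have hM : min l n = n := by omega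
      have hM' : min (l+1) n = n := by omega
      rw [hM, hM']
      show (∑ m ∈ Finset.range (n+1), l.choose m • G m)
          + ∑ m ∈ Finset.range (n+1), l.choose m • G (m+1)
        = ∑ m ∈ Finset.range (n+1), (l+1).choose m • G m
      have hz : G (n+1) = 0 := by
        have e : j - ((n+1:ℕ):ℤ) = -1 := by push_cast; omega
        simp only [hG, e, hneg]
      rw [Finset.sum_range_succ (fun m => l.choose m • G (m+1)) n, hz, smul_zero,
        add_zero, Finset.sum_range_succ' (fun m => l.choose m • G m) n,
        Finset.sum_range_succ' (fun m => (l+1).choose m • G m) n]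
      simp only [Nat.choose_succ_succ, add_smul, Nat.choose_zero_right, one_smul]
      rw [Finset.sum_add_distrib]
      abel
    · have hM : min l n = l := by omega
      have hM' : min (l+1) n = l+1 := by omega
      rw [hM, hM']
      show (∑ m ∈ Finset.range (l+1), l.choose m • G m)
          + ∑ m ∈ Finset.range (l+1), l.choose m • G (m+1)
        = ∑ m ∈ Finset.range (l+1+1), (l+1).choose m • G m
      rw [Finset.sum_range_succ' (fun m => l.choose m • G m) l,
        Finset.sum_range_succ' (fun m => (l+1).choose m • G m) (l+1)]
      simp only [Nat.choose_succ_succ, add_smul, Nat.choose_zero_right, one_smul]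
      rw [Finset.sum_add_distrib,
        Finset.sum_range_succ (fun m => l.choose (m+1) • G (m+1)) l]
      simp only [Nat.choose_succ_self, zero_smul, add_zero]
      abel


/-- Let `f` be a linear endomorphism of an `F`-vector space `V` and `(v_{j,l})` a doubly
indexed family of vectors (with `v_{−1,l} = 0`) satisfying
`f(v_{j,l−1}) = v_{j,l} + v_{j−1,l−1}` for `j ≥ 0`, `l ≥ 1`.  Then
`v_{j,l} = f^l(v_{j,0}) − Σ_{m=1}^{min(l,j)} binom(l,m) · v_{j−m,l−m}`. -/
theorem jordan_chain_shift_formula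
    (F : Type*) [Field F] (V : Type*) [AddCommGroup V] [Module F V]
    (f : Module.End F V) (v : ℤ → ℕ → V)
    (hneg : ∀ l : ℕ, v (-1) l = 0)
    (hrec : ∀ j : ℤ, 0 ≤ j → ∀ l : ℕ, 1 ≤ l →
      f (v j (l - 1)) = v j l + v (j - 1) (l - 1)) :
    ∀ j : ℤ, 0 ≤ j → ∀ l : ℕ,
      v j l = (f ^ l) (v j 0) -
        ∑ m ∈ Finset.Icc 1 (min l j.toNat),
          (l.choose m) • v (j - (m : ℤ)) (l - m) := by
  intro j hj l
  have h := jordan_chain_aux F V f v hneg hrec l j hj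
  rw [Finset.sum_range_succ' (fun m => l.choose m • v (j - (m:ℤ)) (l - m)) (min l j.toNat)]
    at h
  simp only [Nat.choose_zero_right, one_smul, Nat.cast_zero, sub_zero, Nat.sub_zero] at h
  have hIcc : ∑ m ∈ Finset.Icc 1 (min l j.toNat), (l.choose m) • v (j - (m : ℤ)) (l - m)
      = ∑ m ∈ Finset.range (min l j.toNat), (l.choose (m+1)) • v (j - ((m+1:ℕ):ℤ)) (l - (m+1)) := by
    rw [← Finset.Ico_add_one_right_eq_Icc, Finset.sum_Ico_eq_sum_range]
    apply Finset.sum_congr (by norm_num)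
    intro m _
    rw [add_comm 1 m]
  rw [hIcc, h]
  abel
end

section
/- Let V be a vector space over a field F, f : V → V a linear endomorphism, Q(X) = q₀ + q₁X + ⋯ + q_{d−1}X^{d−1} + X^d a monic polynomial of degree d ≥ 1 over F, and (v_{j,l}) a family of vectors in V (j ≥ 0, 0 ≤ l ≤ d−1, convention v_{−1,l} = 0) satisfying f(v_{j,l−1}) = v_{j,l} + v_{j−1,l−1} for 1 ≤ l ≤ d−1, and f(v_{j,d−1}) = −Σ_{l=0}^{d−1} q_l v_{j,l} + v_{j−1,d−1}. Then for every j ≥ 0: Q(f)(v_{j,0}) = Σ_{l=1}^{d} q_l · Σ_{m=1}^{min(l,j)} binom(l,m) · v_{j−m,l−m}, where q_d = 1. -/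
lemma sum_Icc_one {M : Type*} [AddCommMonoid M] (n : ℕ) (g : ℕ → M) :
    ∑ m ∈ Finset.Icc 1 n, g m = ∑ i ∈ Finset.range n, g (i+1) := by
  rw [← Finset.Ico_add_one_right_eq_Icc, Finset.sum_Ico_eq_sum_range]
  have : n + 1 - 1 = n := rfl
  rw [this]
  exact Finset.sum_congr rfl fun i _ => by rw [Nat.add_comm]

lemma pascal_sum {V : Type*} [AddCommGroup V] (k : ℕ) (a : ℕ → V) :
    ∑ m ∈ Finset.range (k+2), (k+1).choose m • a m
      = ∑ m ∈ Finset.range (k+1), k.choose m • (a m + a (m+1)) := by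
  rw [Finset.sum_range_succ']
  simp only [Nat.choose_succ_succ, add_smul, Finset.sum_add_distrib, smul_add]
  have h1 : ∑ m ∈ Finset.range (k+1), k.choose (m+1) • a (m+1)
      = ∑ m ∈ Finset.range (k+1), k.choose m • a m - k.choose 0 • a 0 := by
    rw [eq_sub_iff_add_eq,
      ← Finset.sum_range_succ' (fun m => k.choose m • a m) (k+1),
      Finset.sum_range_succ]
    simp
  rw [h1]
  simp
  abel

lemma aux_pow {F : Type*} [Field F] {V : Type*} [AddCommGroup V] [Module F V]
    (f : Module.End F V) (d : ℕ) (w : ℤ → ℕ → V)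
    (hrec : ∀ j : ℤ, ∀ l : ℕ, 1 ≤ l → l ≤ d - 1 →
      f (w j (l - 1)) = w j l + w (j - 1) (l - 1)) :
    ∀ k, k ≤ d - 1 → ∀ j : ℤ,
      (f ^ k) (w j 0) = ∑ m ∈ Finset.range (k+1), k.choose m • w (j - m) (k - m) := by
  intro k
  induction k with
  | zero => intro _ j; simp
  | succ k ih =>
    intro hk j
    have hk' : k ≤ d - 1 := le_trans (Nat.le_succ k) hk
    rw [pow_succ', Module.End.mul_apply, ih hk' j, map_sum]
    have key : ∀ m ∈ Finset.range (k+1),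
        f (k.choose m • w (j - m) (k - m))
          = k.choose m • (w (j - (m:ℤ)) (k+1 - m) + w (j - ((m+1 : ℕ) : ℤ)) (k+1 - (m+1))) := by
      intro m hm
      rw [Finset.mem_range, Nat.lt_succ_iff] at hm
      have h1 : (1:ℕ) ≤ k - m + 1 := le_add_self
      have h2 : k - m + 1 ≤ d - 1 := by omega
      have h := hrec (j - m) (k - m + 1) h1 h2
      rw [Nat.add_sub_cancel] at h
      have e1 : k - m + 1 = k + 1 - m := by omega
      have e2 : (j : ℤ) - m - 1 = j - ((m+1 : ℕ) : ℤ) := by push_cast; ring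
      have e3 : k + 1 - (m + 1) = k - m := by omega
      rw [map_nsmul, h, e1, e2, e3]
    rw [Finset.sum_congr rfl key]
    exact (pascal_sum k (fun m => w (j - m) (k + 1 - m))).symm

lemma aux_d {F : Type*} [Field F] {V : Type*} [AddCommGroup V] [Module F V]
    (f : Module.End F V) (d : ℕ) (q : ℕ → F) (w : ℤ → ℕ → V) (hd : 1 ≤ d)
    (hrec : ∀ j : ℤ, ∀ l : ℕ, 1 ≤ l → l ≤ d - 1 →
      f (w j (l - 1)) = w j l + w (j - 1) (l - 1))
    (hrecd : ∀ j : ℤ,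
      f (w j (d - 1)) = -(∑ l ∈ Finset.range d, q l • w j l) + w (j - 1) (d - 1)) :
    ∀ j : ℤ, (f ^ d) (w j 0)
      = -(∑ l ∈ Finset.range d, q l • w j l)
        + ∑ m ∈ Finset.Icc 1 d, d.choose m • w (j - m) (d - m) := by
  intro j
  obtain ⟨e, rfl⟩ : ∃ e, d = e + 1 := ⟨d - 1, by omega⟩
  rw [pow_succ', Module.End.mul_apply, aux_pow f (e+1) w hrec e (by omega) j, map_sum,
    Finset.sum_range_succ' (fun m => f ((e.choose m) • w (j - m) (e - m))) e]
  have h0 : f (e.choose 0 • w (j - ((0:ℕ):ℤ)) (e - 0)) =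
      -(∑ l ∈ Finset.range (e+1), q l • w j l) + w (j - 1) e := by
    simpa using hrecd j
  have hterm : ∀ m ∈ Finset.range e,
      f (e.choose (m+1) • w (j - ((m+1:ℕ):ℤ)) (e - (m+1)))
        = e.choose (m+1) • (w (j - (m:ℤ) - 1) (e - m) + w (j - (m:ℤ) - 2) (e - (m+1))) := by
    intro m hm
    rw [Finset.mem_range] at hm
    have h1 : (1:ℕ) ≤ e - m := by omega
    have h2 : e - m ≤ e + 1 - 1 := by omega
    have h := hrec (j - ((m+1:ℕ):ℤ)) (e - m) h1 h2
    have e0 : e - m - 1 = e - (m + 1) := by omega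
    have e1 : (j:ℤ) - ((m+1:ℕ):ℤ) = j - m - 1 := by push_cast; ring
    have e2 : (j:ℤ) - (m:ℤ) - 1 - 1 = j - m - 2 := by ring
    rw [e0, e1] at h
    rw [map_nsmul, e1, h, e2]
  rw [h0, Finset.sum_congr rfl hterm]
  have hrhs : ∑ m ∈ Finset.Icc 1 (e+1), (e+1).choose m • w (j - m) (e + 1 - m)
      = ((∑ m ∈ Finset.range e, e.choose (m+1) • w (j - (m:ℤ) - 2) (e - (m+1)))
          + w (j - 1) e)
        + ∑ m ∈ Finset.range e, e.choose (m+1) • w (j - (m:ℤ) - 1) (e - m) := by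
    rw [sum_Icc_one (e+1) (fun m => (e+1).choose m • w (j - m) (e + 1 - m))]
    have step : ∀ i ∈ Finset.range (e+1),
        (e+1).choose (i+1) • w (j - ((i+1:ℕ):ℤ)) (e+1 - (i+1))
          = e.choose i • w (j - (i:ℤ) - 1) (e - i)
            + e.choose (i+1) • w (j - (i:ℤ) - 1) (e - i) := by
      intro i hi
      have e1 : (j:ℤ) - ((i+1:ℕ):ℤ) = j - i - 1 := by push_cast; ring
      have e2 : e + 1 - (i + 1) = e - i := by omega
      rw [e1, e2, Nat.choose_succ_succ, add_smul]
    rw [Finset.sum_congr rfl step, Finset.sum_add_distrib]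
    congr 1
    · rw [Finset.sum_range_succ' (fun i => e.choose i • w (j - (i:ℤ) - 1) (e - i)) e]
      congr 1
      · refine Finset.sum_congr rfl fun m hm => ?_
        have e1 : (j:ℤ) - ((m+1:ℕ):ℤ) - 1 = j - m - 2 := by push_cast; ring
        rw [e1]
      · simp
    · rw [Finset.sum_range_succ]
      simp
  rw [hrhs]
  simp only [smul_add, Finset.sum_add_distrib]
  abel




/-- Let `f` be a linear endomorphism of an `F`-vector space `V`, let
`Q(X) = q₀ + q₁X + ⋯ + q_{d−1}X^{d−1} + X^d` be monic of degree `d ≥ 1`, and let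
`(v_{j,l})` (`j ≥ 0`, `0 ≤ l ≤ d−1`, with `v_{−1,l} = 0`) satisfy
`f(v_{j,l−1}) = v_{j,l} + v_{j−1,l−1}` for `1 ≤ l ≤ d−1` and
`f(v_{j,d−1}) = −Σ_{l=0}^{d−1} q_l v_{j,l} + v_{j−1,d−1}`.  Then for every `j ≥ 0`,
`Q(f)(v_{j,0}) = Σ_{l=1}^{d} q_l Σ_{m=1}^{min(l,j)} binom(l,m) · v_{j−m,l−m}`
(where `q_d = 1`). -/
theorem jordan_chain_Q_image_formula
    (F : Type*) [Field F] (V : Type*) [AddCommGroup V] [Module F V]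
    (f : Module.End F V) (Q : Polynomial F) (d : ℕ)
    (hQ : Q.Monic) (hdeg : Q.natDegree = d) (hd : 1 ≤ d)
    (v : ℤ → ℕ → V)
    (hneg : ∀ l : ℕ, v (-1) l = 0)
    (hrec : ∀ j : ℤ, 0 ≤ j → ∀ l : ℕ, 1 ≤ l → l ≤ d - 1 →
      f (v j (l - 1)) = v j l + v (j - 1) (l - 1))
    (hrecd : ∀ j : ℤ, 0 ≤ j →
      f (v j (d - 1)) =
        -(∑ l ∈ Finset.range d, Q.coeff l • v j l) + v (j - 1) (d - 1)) :
    ∀ j : ℤ, 0 ≤ j →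
      (Polynomial.aeval f Q) (v j 0) =
        ∑ l ∈ Finset.Icc 1 d, Q.coeff l •
          ∑ m ∈ Finset.Icc 1 (min l j.toNat),
            (l.choose m) • v (j - (m : ℤ)) (l - m) := by
  set w : ℤ → ℕ → V := fun j l => if j < 0 then 0 else v j l with hw_def
  have hw_eq : ∀ j : ℤ, 0 ≤ j → ∀ l, w j l = v j l := by
    intro j hj l; simp [hw_def, not_lt.mpr hj]
  have hw_zero : ∀ j : ℤ, j < 0 → ∀ l, w j l = 0 := by
    intro j hj l; simp [hw_def, hj]
  have hw_eq' : ∀ j : ℤ, 0 ≤ j → ∀ l, w (j - 1) l = v (j - 1) l := by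
    intro j hj l
    rcases eq_or_lt_of_le hj with h | h
    · rw [← h]; rw [hw_zero _ (by norm_num) l]
      have : (0:ℤ) - 1 = -1 := by norm_num
      rw [this, hneg l]
    · exact hw_eq (j - 1) (by omega) l
  have hrec' : ∀ j : ℤ, ∀ l : ℕ, 1 ≤ l → l ≤ d - 1 →
      f (w j (l - 1)) = w j l + w (j - 1) (l - 1) := by
    intro j l h1 h2
    rcases lt_or_ge j 0 with h | h
    · rw [hw_zero j h, hw_zero j h, hw_zero (j-1) (by omega), map_zero, add_zero]
    · rw [hw_eq j h, hw_eq j h, hw_eq' j h]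
      exact hrec j h l h1 h2
  have hrecd' : ∀ j : ℤ,
      f (w j (d - 1)) = -(∑ l ∈ Finset.range d, Q.coeff l • w j l)
        + w (j - 1) (d - 1) := by
    intro j
    rcases lt_or_ge j 0 with h | h
    · simp only [hw_zero j h, hw_zero (j-1) (by omega : j - 1 < 0), map_zero, smul_zero,
        Finset.sum_const_zero, neg_zero, add_zero]
    · rw [hw_eq' j h]
      rw [Finset.sum_congr rfl (fun l _ => by rw [hw_eq j h l])]
      rw [hw_eq j h]
      exact hrecd j h
  intro j hj
  have hcoeffd : Q.coeff d = 1 := by rw [← hdeg]; exact hQ.coeff_natDegree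
  have expand : (Polynomial.aeval f Q) (v j 0)
      = ∑ k ∈ Finset.range (d+1), Q.coeff k • ((f ^ k) (w j 0)) := by
    rw [Polynomial.aeval_eq_sum_range, hdeg]
    rw [← hw_eq j hj 0]
    simp [LinearMap.sum_apply, LinearMap.smul_apply]
  rw [expand, Finset.sum_range_succ, hcoeffd, one_smul,
    aux_d f d (fun l => Q.coeff l) w hd hrec' hrecd' j]
  have hpows : ∀ k ∈ Finset.range d, Q.coeff k • ((f ^ k) (w j 0))
      = Q.coeff k • ((∑ m ∈ Finset.range k,
          k.choose (m+1) • w (j - ((m+1:ℕ):ℤ)) (k - (m+1))) + w j k) := by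
    intro k hk
    rw [Finset.mem_range] at hk
    rw [aux_pow f d w hrec' k (by omega) j,
      Finset.sum_range_succ' (fun m => k.choose m • w (j - m) (k - m)) k]
    congr 2
    simp
  rw [Finset.sum_congr rfl hpows]
  -- Right-hand side
  have hR : (∑ l ∈ Finset.Icc 1 d, Q.coeff l •
        ∑ m ∈ Finset.Icc 1 (min l j.toNat), (l.choose m) • v (j - (m : ℤ)) (l - m))
      = ∑ l ∈ Finset.Icc 1 d, Q.coeff l •
          ∑ m ∈ Finset.range l, (l.choose (m+1)) • w (j - ((m+1:ℕ):ℤ)) (l - (m+1)) := by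
    refine Finset.sum_congr rfl fun l hl => ?_
    congr 1
    rw [← sum_Icc_one l (fun m => l.choose m • w (j - m) (l - m))]
    have hvw : ∀ m ∈ Finset.Icc 1 (min l j.toNat),
        (l.choose m) • v (j - (m : ℤ)) (l - m)
          = (l.choose m) • w (j - (m : ℤ)) (l - m) := by
      intro m hm
      rw [Finset.mem_Icc] at hm
      have h0 : (0:ℤ) ≤ j - m := by omega
      rw [hw_eq (j - m) h0]
    rw [Finset.sum_congr rfl hvw]
    refine Finset.sum_subset ?_ ?_
    · intro m hm
      rw [Finset.mem_Icc] at *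
      omega
    · intro m hmt hms
      rw [Finset.mem_Icc] at hmt hms
      have h0 : j - (m:ℤ) < 0 := by omega
      rw [hw_zero (j - m) h0, smul_zero]
  rw [hR]
  have hR2 : (∑ l ∈ Finset.Icc 1 d, Q.coeff l •
        ∑ m ∈ Finset.range l, (l.choose (m+1)) • w (j - ((m+1:ℕ):ℤ)) (l - (m+1)))
      = (∑ l ∈ Finset.range d, Q.coeff l •
          ∑ m ∈ Finset.range l, (l.choose (m+1)) • w (j - ((m+1:ℕ):ℤ)) (l - (m+1)))
        + Q.coeff d • ∑ m ∈ Finset.range d,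
            (d.choose (m+1)) • w (j - ((m+1:ℕ):ℤ)) (d - (m+1)) := by
    set g : ℕ → V := fun l => Q.coeff l •
      ∑ m ∈ Finset.range l, (l.choose (m+1)) • w (j - ((m+1:ℕ):ℤ)) (l - (m+1)) with hg
    have hg0 : g 0 = 0 := by simp [hg]
    calc ∑ l ∈ Finset.Icc 1 d, g l = ∑ i ∈ Finset.range d, g (i+1) := sum_Icc_one d g
      _ = ∑ i ∈ Finset.range d, g (i+1) + g 0 := by rw [hg0, add_zero]
      _ = ∑ l ∈ Finset.range (d+1), g l := (Finset.sum_range_succ' g d).symm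
      _ = ∑ l ∈ Finset.range d, g l + g d := Finset.sum_range_succ g d
  rw [hR2, hcoeffd, one_smul]
  have hIcc : ∑ m ∈ Finset.Icc 1 d, d.choose m • w (j - m) (d - m)
      = ∑ m ∈ Finset.range d, (d.choose (m+1)) • w (j - ((m+1:ℕ):ℤ)) (d - (m+1)) :=
    sum_Icc_one d (fun m => d.choose m • w (j - m) (d - m))
  rw [hIcc]
  simp only [smul_add, Finset.sum_add_distrib]
  abel
end
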